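/- arXiv:cs/0606044 — 6 statements merged into one kernel-verified Lean document; each statement's English description precedes it below -/
import Mathlib

section
/- For any monopoly-free set system (E,F) and any feasible set S, the supremum over all nonnegative cost vectors c for which S is a cheapest feasible set and NTUmax(c,S) > 0 of TUmax(c,S)/NTUmax(c,S), the supremum over all nonnegative cost vectors c for which S is a cheapest feasible set and NTUmin(c,S) > 0 of NTUmax(c,S)/NTUmin(c,S), and the supremum over all nonnegative cost vectors c for which S is a cheapest feasible set and TUmin(c,S) > 0 of NTUmin(c,S)/TUmin(c,S), are all equal. -/
open Finset

/-- A set system `(E, F)` is monopoly-free if no element of the ground set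
belongs to every feasible set. -/
def MonopolyFree {E : Type*} (F : Set (Finset E)) : Prop :=
  ∀ e : E, ∃ T ∈ F, e ∉ T

/-- `S` is a cheapest feasible set of the set system `(E, F)` with respect to
the cost vector `c`. -/
def IsCheapest {E : Type*} (F : Set (Finset E)) (c : E → ℝ) (S : Finset E) : Prop :=
  S ∈ F ∧ ∀ T ∈ F, ∑ e ∈ S, c e ≤ ∑ e ∈ T, c e

/-- Bid vectors satisfying conditions (1), (2) and (3). -/
def BidsNTU {E : Type*} [DecidableEq E] (F : Set (Finset E)) (c : E → ℝ) (S : Finset E) :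
    Set (E → ℝ) :=
  {b | (∀ e ∈ S, c e ≤ b e) ∧
       (∀ T ∈ F, ∑ e ∈ S \ T, b e ≤ ∑ e ∈ T \ S, c e) ∧
       (∀ e ∈ S, ∃ T ∈ F, e ∉ T ∧ ∑ e' ∈ S \ T, b e' = ∑ e' ∈ T \ S, c e')}

/-- Bid vectors satisfying conditions (1*), (2) and (3). -/
def BidsTU {E : Type*} [DecidableEq E] (F : Set (Finset E)) (c : E → ℝ) (S : Finset E) :
    Set (E → ℝ) :=
  {b | (∀ e ∈ S, 0 ≤ b e) ∧
       (∀ T ∈ F, ∑ e ∈ S \ T, b e ≤ ∑ e ∈ T \ S, c e) ∧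
       (∀ e ∈ S, ∃ T ∈ F, e ∉ T ∧ ∑ e' ∈ S \ T, b e' = ∑ e' ∈ T \ S, c e')}

noncomputable def NTUmin {E : Type*} [DecidableEq E] (F : Set (Finset E)) (c : E → ℝ)
    (S : Finset E) : ℝ :=
  sInf ((fun b => ∑ e ∈ S, b e) '' BidsNTU F c S)

noncomputable def NTUmax {E : Type*} [DecidableEq E] (F : Set (Finset E)) (c : E → ℝ)
    (S : Finset E) : ℝ :=
  sSup ((fun b => ∑ e ∈ S, b e) '' BidsNTU F c S)

noncomputable def TUmin {E : Type*} [DecidableEq E] (F : Set (Finset E)) (c : E → ℝ)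
    (S : Finset E) : ℝ :=
  sInf ((fun b => ∑ e ∈ S, b e) '' BidsTU F c S)

noncomputable def TUmax {E : Type*} [DecidableEq E] (F : Set (Finset E)) (c : E → ℝ)
    (S : Finset E) : ℝ :=
  sSup ((fun b => ∑ e ∈ S, b e) '' BidsTU F c S)

/-! ### Auxiliary machinery -/

section SupCycle

/-- `DomSR X Y` : every element of `X` is nearly dominated by an element of `Y`. -/
def DomSR (X Y : Set ℝ) : Prop := ∀ r ∈ X, ∀ δ : ℝ, 0 < δ → ∃ r' ∈ Y, r - δ ≤ r'

lemma DomSR.nonempty {X Y : Set ℝ} (h : DomSR X Y) (hX : X.Nonempty) : Y.Nonempty := by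
  obtain ⟨r, hr⟩ := hX
  obtain ⟨r', hr', -⟩ := h r hr 1 one_pos
  exact ⟨r', hr'⟩

lemma DomSR.bddAbove {X Y : Set ℝ} (h : DomSR X Y) (hY : BddAbove Y) : BddAbove X := by
  obtain ⟨M, hM⟩ := hY
  refine ⟨M + 1, fun r hr => ?_⟩
  obtain ⟨r', hr', hle⟩ := h r hr 1 one_pos
  have := hM hr'
  linarith

lemma DomSR.sSup_le {X Y : Set ℝ} (h : DomSR X Y) (hX : X.Nonempty) (hY : BddAbove Y) :
    sSup X ≤ sSup Y := by
  refine csSup_le hX fun r hr => ?_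
  refine le_of_forall_pos_le_add fun δ hδ => ?_
  obtain ⟨r', hr', hle⟩ := h r hr δ hδ
  have := le_csSup hY hr'
  linarith

lemma sup_cycle {X Y Z : Set ℝ} (hXZ : DomSR X Z) (hZY : DomSR Z Y) (hYX : DomSR Y X) :
    sSup X = sSup Y ∧ sSup Y = sSup Z := by
  by_cases hX : X.Nonempty
  · have hZ : Z.Nonempty := hXZ.nonempty hX
    have hY : Y.Nonempty := hZY.nonempty hZ
    by_cases hbX : BddAbove X
    · have hbY : BddAbove Y := hYX.bddAbove hbX
      have hbZ : BddAbove Z := hZY.bddAbove hbY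
      have h1 := hXZ.sSup_le hX hbZ
      have h2 := hZY.sSup_le hZ hbY
      have h3 := hYX.sSup_le hY hbX
      constructor <;> linarith
    · have hbZ : ¬ BddAbove Z := fun hb => hbX (hXZ.bddAbove hb)
      have hbY : ¬ BddAbove Y := fun hb => hbZ (hZY.bddAbove hb)
      rw [Real.sSup_of_not_bddAbove hbX, Real.sSup_of_not_bddAbove hbY,
        Real.sSup_of_not_bddAbove hbZ]
      exact ⟨rfl, rfl⟩
  · have hY : ¬ Y.Nonempty := fun hy => hX (hYX.nonempty hy)
    have hZ : ¬ Z.Nonempty := fun hz => hY (hZY.nonempty hz)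
    rw [Set.not_nonempty_iff_eq_empty] at hX hY hZ
    rw [hX, hY, hZ]
    exact ⟨rfl, rfl⟩

end SupCycle

section Aux
variable {E : Type*} [DecidableEq E] {F : Set (Finset E)} {S : Finset E}

lemma sum_off_eq {c d : E → ℝ} (h : ∀ e ∉ S, c e = d e) (T : Finset E) :
    ∑ e ∈ T \ S, c e = ∑ e ∈ T \ S, d e := by
  refine Finset.sum_congr rfl fun e he => h e (Finset.mem_sdiff.mp he).2

lemma bidsTU_congr {c d : E → ℝ} (h : ∀ e ∉ S, c e = d e) :
    BidsTU F c S = BidsTU F d S := by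
  ext b
  simp only [BidsTU, Set.mem_setOf_eq]
  constructor <;> rintro ⟨h1, h2, h3⟩ <;> refine ⟨h1, ?_, ?_⟩
  · intro T hT; rw [← sum_off_eq h]; exact h2 T hT
  · intro e he; obtain ⟨T, hT, heT, hsum⟩ := h3 e he
    exact ⟨T, hT, heT, by rw [← sum_off_eq h]; exact hsum⟩
  · intro T hT; rw [sum_off_eq h]; exact h2 T hT
  · intro e he; obtain ⟨T, hT, heT, hsum⟩ := h3 e he
    exact ⟨T, hT, heT, by rw [sum_off_eq h]; exact hsum⟩

lemma ntu_subset_tu {c : E → ℝ} (hc : ∀ e, 0 ≤ c e) :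
    BidsNTU F c S ⊆ BidsTU F c S := by
  rintro b ⟨h1, h2, h3⟩
  exact ⟨fun e he => le_trans (hc e) (h1 e he), h2, h3⟩

lemma bidsNTU_eq_tu_of_zero {c : E → ℝ} (h : ∀ e ∈ S, c e = 0) :
    BidsNTU F c S = BidsTU F c S := by
  ext b
  simp only [BidsNTU, BidsTU, Set.mem_setOf_eq]
  constructor <;> rintro ⟨h1, h2, h3⟩ <;> refine ⟨?_, h2, h3⟩
  · intro e he; rw [← h e he]; exact h1 e he
  · intro e he; rw [h e he]; exact h1 e he

lemma tu_sum_nonneg {c : E → ℝ} {b : E → ℝ} (hb : b ∈ BidsTU F c S) :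
    0 ≤ ∑ e ∈ S, b e :=
  Finset.sum_nonneg fun e he => hb.1 e he

lemma tu_sum_bddAbove (hmf : MonopolyFree F) (c : E → ℝ) :
    BddAbove ((fun b => ∑ e ∈ S, b e) '' BidsTU F c S) := by
  classical
  refine ⟨∑ e ∈ S, ∑ e' ∈ (hmf e).choose \ S, c e', ?_⟩
  rintro x ⟨b, hb, rfl⟩
  refine Finset.sum_le_sum fun e he => ?_
  obtain ⟨hT, heT⟩ := (hmf e).choose_spec
  calc b e ≤ ∑ e' ∈ S \ (hmf e).choose, b e' := by
        refine Finset.single_le_sum (fun e' he' => hb.1 e' (Finset.mem_sdiff.mp he').1) ?_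
        exact Finset.mem_sdiff.mpr ⟨he, heT⟩
    _ ≤ _ := hb.2.1 _ hT

lemma ntu_sum_bddAbove (hmf : MonopolyFree F) {c : E → ℝ} (hc : ∀ e, 0 ≤ c e) :
    BddAbove ((fun b => ∑ e ∈ S, b e) '' BidsNTU F c S) :=
  (tu_sum_bddAbove hmf c).mono (Set.image_mono (ntu_subset_tu hc))

lemma tu_img_bddBelow {c : E → ℝ} :
    BddBelow ((fun b => ∑ e ∈ S, b e) '' BidsTU F c S) := by
  refine ⟨0, ?_⟩
  rintro x ⟨b, hb, rfl⟩
  exact tu_sum_nonneg hb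

lemma ntu_img_bddBelow {c : E → ℝ} (hc : ∀ e, 0 ≤ c e) :
    BddBelow ((fun b => ∑ e ∈ S, b e) '' BidsNTU F c S) :=
  tu_img_bddBelow.mono (Set.image_mono (ntu_subset_tu hc))

lemma cheapest_iff {c : E → ℝ} (hS : S ∈ F) :
    IsCheapest F c S ↔ ∀ T ∈ F, ∑ e ∈ S \ T, c e ≤ ∑ e ∈ T \ S, c e := by
  constructor
  · rintro ⟨-, h⟩ T hT
    have h1 : ∑ e ∈ S ∩ T, c e + ∑ e ∈ S \ T, c e = ∑ e ∈ S, c e :=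
      Finset.sum_inter_add_sum_sdiff S T c
    have h2 : ∑ e ∈ T ∩ S, c e + ∑ e ∈ T \ S, c e = ∑ e ∈ T, c e :=
      Finset.sum_inter_add_sum_sdiff T S c
    have := h T hT
    rw [← h1, ← h2, Finset.inter_comm] at this
    linarith
  · intro h
    refine ⟨hS, fun T hT => ?_⟩
    have h1 : ∑ e ∈ S ∩ T, c e + ∑ e ∈ S \ T, c e = ∑ e ∈ S, c e :=
      Finset.sum_inter_add_sum_sdiff S T c
    have h2 : ∑ e ∈ T ∩ S, c e + ∑ e ∈ T \ S, c e = ∑ e ∈ T, c e :=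
      Finset.sum_inter_add_sum_sdiff T S c
    have := h T hT
    rw [Finset.inter_comm] at h2
    linarith

end Aux

section Pin
variable {E : Type*} [DecidableEq E] {F : Set (Finset E)} {S : Finset E}

/-- The "pinned" cost: equal to `bs` on `S`, to `c` off `S`. -/
noncomputable def pin (S : Finset E) (bs c : E → ℝ) : E → ℝ :=
  fun e => if e ∈ S then bs e else c e

lemma pin_off {bs c : E → ℝ} : ∀ e ∉ S, pin S bs c e = c e := fun _ he => if_neg he

lemma pin_on {bs c : E → ℝ} : ∀ e ∈ S, pin S bs c e = bs e := fun _ he => if_pos he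

lemma pin_nonneg {bs c : E → ℝ} (hc : ∀ e, 0 ≤ c e) (hbs : ∀ e ∈ S, 0 ≤ bs e) :
    ∀ e, 0 ≤ pin S bs c e := by
  intro e
  unfold pin
  split
  · exact hbs e ‹_›
  · exact hc e

lemma pin_sum_off {bs c : E → ℝ} (T : Finset E) :
    ∑ e ∈ T \ S, pin S bs c e = ∑ e ∈ T \ S, c e :=
  sum_off_eq pin_off T

lemma pin_tu {bs c : E → ℝ} : BidsTU F (pin S bs c) S = BidsTU F c S :=
  bidsTU_congr pin_off

lemma pin_cheapest {c bs : E → ℝ} (hS : S ∈ F) (hbs : bs ∈ BidsTU F c S) :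
    IsCheapest F (pin S bs c) S := by
  rw [cheapest_iff hS]
  intro T hT
  rw [pin_sum_off]
  calc ∑ e ∈ S \ T, pin S bs c e = ∑ e ∈ S \ T, bs e :=
        Finset.sum_congr rfl fun e he => pin_on e (Finset.mem_sdiff.mp he).1
    _ ≤ _ := hbs.2.1 T hT

lemma pin_img {c bs : E → ℝ} (hbs : bs ∈ BidsTU F c S) :
    (fun b => ∑ e ∈ S, b e) '' BidsNTU F (pin S bs c) S = {∑ e ∈ S, bs e} := by
  obtain ⟨hbs1, hbs2, hbs3⟩ := hbs
  have hmem : bs ∈ BidsNTU F (pin S bs c) S := by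
    refine ⟨fun e he => le_of_eq (pin_on e he), fun T hT => ?_, fun e he => ?_⟩
    · rw [pin_sum_off]; exact hbs2 T hT
    · obtain ⟨T, hT, heT, hsum⟩ := hbs3 e he
      exact ⟨T, hT, heT, by rw [pin_sum_off]; exact hsum⟩
  apply Set.eq_singleton_iff_unique_mem.mpr
  refine ⟨⟨bs, hmem, rfl⟩, ?_⟩
  rintro x ⟨b, ⟨hb1, hb2, -⟩, rfl⟩
  have key : ∀ e ∈ S, b e = bs e := by
    intro e he
    obtain ⟨T, hT, heT, hsum⟩ := hbs3 e he
    have hle : ∑ e' ∈ S \ T, b e' ≤ ∑ e' ∈ S \ T, bs e' := by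
      have := hb2 T hT
      rw [pin_sum_off] at this
      rw [hsum]; exact this
    have hge : ∀ e' ∈ S \ T, bs e' ≤ b e' := fun e' he' => by
      have h' := hb1 e' (Finset.mem_sdiff.mp he').1
      rwa [pin_on e' (Finset.mem_sdiff.mp he').1] at h'
    have heq : ∀ e' ∈ S \ T, b e' = bs e' := by
      intro e' he'
      by_contra hne
      have hlt : bs e' < b e' := lt_of_le_of_ne (hge e' he') (Ne.symm hne)
      have : ∑ e' ∈ S \ T, bs e' < ∑ e' ∈ S \ T, b e' :=
        Finset.sum_lt_sum hge ⟨e', he', hlt⟩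
      linarith
    exact heq e (Finset.mem_sdiff.mpr ⟨he, heT⟩)
  exact Finset.sum_congr rfl key

lemma pin_NTUmax {c bs : E → ℝ} (hbs : bs ∈ BidsTU F c S) :
    NTUmax F (pin S bs c) S = ∑ e ∈ S, bs e := by
  unfold NTUmax
  rw [pin_img hbs]
  exact csSup_singleton _

lemma pin_NTUmin {c bs : E → ℝ} (hbs : bs ∈ BidsTU F c S) :
    NTUmin F (pin S bs c) S = ∑ e ∈ S, bs e := by
  unfold NTUmin
  rw [pin_img hbs]
  exact csInf_singleton _

lemma pin_TUmax (c bs : E → ℝ) : TUmax F (pin S bs c) S = TUmax F c S := by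
  unfold TUmax; rw [pin_tu]

lemma pin_TUmin (c bs : E → ℝ) : TUmin F (pin S bs c) S = TUmin F c S := by
  unfold TUmin; rw [pin_tu]

end Pin

section Fallback
variable {E : Type*} [DecidableEq E] {F : Set (Finset E)} {S : Finset E}

/-- the fallback cost: 0 on S, 1 off S -/
noncomputable def cFB (S : Finset E) : E → ℝ := fun e => if e ∈ S then 0 else 1

lemma cFB_sum (T : Finset E) : ∑ e ∈ T \ S, cFB S e = ((T \ S).card : ℝ) := by
  rw [Finset.card_eq_sum_ones]
  push_cast
  refine Finset.sum_congr rfl fun e he => ?_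
  simp [cFB, (Finset.mem_sdiff.mp he).2]

lemma fallback_exists (hmf : MonopolyFree F) : (BidsTU F (cFB S) S).Nonempty := by
  classical
  set Feas : (E → ℕ) → Prop :=
    fun b => (∀ e, e ∉ S → b e = 0) ∧ ∀ T ∈ F, ∑ e ∈ S \ T, b e ≤ (T \ S).card with hFeas
  set V : Set ℕ := {n | ∃ b, Feas b ∧ ∑ e ∈ S, b e = n} with hV
  have h0 : (0 : ℕ) ∈ V := ⟨fun _ => 0, ⟨fun _ _ => rfl, fun T _ => by simp⟩, by simp⟩
  have hbdd : BddAbove V := by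
    refine ⟨∑ e ∈ S, ((hmf e).choose \ S).card, ?_⟩
    rintro n ⟨b, ⟨-, hb2⟩, rfl⟩
    refine Finset.sum_le_sum fun e he => ?_
    obtain ⟨hT, heT⟩ := (hmf e).choose_spec
    calc b e ≤ ∑ e' ∈ S \ (hmf e).choose, b e' :=
          Finset.single_le_sum (fun _ _ => Nat.zero_le _)
            (Finset.mem_sdiff.mpr ⟨he, heT⟩)
      _ ≤ _ := hb2 _ hT
  have hmem := Nat.sSup_mem ⟨0, h0⟩ hbdd
  obtain ⟨b, hb, hbsum⟩ := hmem
  have tight : ∀ e ∈ S, ∃ T ∈ F, e ∉ T ∧ ∑ e' ∈ S \ T, b e' = (T \ S).card := by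
    intro e he
    by_contra hno
    push_neg at hno
    have hlt : ∀ T ∈ F, e ∉ T → ∑ e' ∈ S \ T, b e' < (T \ S).card := by
      intro T hT heT
      exact lt_of_le_of_ne (hb.2 T hT) (hno T hT heT)
    set b' : E → ℕ := Function.update b e (b e + 1) with hb'
    have hb'feas : Feas b' := by
      constructor
      · intro x hx
        have hxe : x ≠ e := fun h => hx (h ▸ he)
        rw [hb', Function.update_of_ne hxe]
        exact hb.1 x hx
      · intro T hT
        by_cases heT : e ∈ S \ T
        · have : ∑ e' ∈ S \ T, b' e' = ∑ e' ∈ S \ T, b e' + 1 := by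
            rw [hb', Finset.sum_update_of_mem heT, ← Finset.erase_eq,
              ← Finset.sum_erase_add (S \ T) b heT]
            ring
          rw [this]
          exact Nat.succ_le_of_lt (hlt T hT (fun h => (Finset.mem_sdiff.mp heT).2 h))
        · have : ∑ e' ∈ S \ T, b' e' = ∑ e' ∈ S \ T, b e' := by
            refine Finset.sum_congr rfl fun x hx => ?_
            have : x ≠ e := fun h => heT (h ▸ hx)
            rw [hb', Function.update_of_ne this]
          rw [this]; exact hb.2 T hT
    have hsum' : ∑ e' ∈ S, b' e' = sSup V + 1 := by
      rw [hb', Finset.sum_update_of_mem he, ← Finset.erase_eq,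
        ← hbsum, ← Finset.sum_erase_add S b he]
      ring
    have : sSup V + 1 ∈ V := ⟨b', hb'feas, hsum'⟩
    have := le_csSup hbdd this
    omega
  refine ⟨fun e => (b e : ℝ), ?_, ?_, ?_⟩
  · intro e _; positivity
  · intro T hT
    rw [cFB_sum]
    calc ∑ e ∈ S \ T, ((b e : ℝ)) = ((∑ e ∈ S \ T, b e : ℕ) : ℝ) := by push_cast; ring
      _ ≤ _ := by exact_mod_cast hb.2 T hT
  · intro e he
    obtain ⟨T, hT, heT, hsum⟩ := tight e he
    refine ⟨T, hT, heT, ?_⟩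
    rw [cFB_sum]
    have := congrArg (Nat.cast (R := ℝ)) hsum; push_cast at this; exact this

lemma cFB_nonneg : ∀ e, 0 ≤ cFB S e := by
  intro e; unfold cFB; split <;> norm_num

lemma cFB_cheapest (hS : S ∈ F) : IsCheapest F (cFB S) S := by
  refine ⟨hS, fun T hT => ?_⟩
  have h1 : ∑ e ∈ S, cFB S e = 0 := Finset.sum_eq_zero fun e he => if_pos he
  rw [h1]
  exact Finset.sum_nonneg fun e _ => cFB_nonneg e

end Fallback

section DomLemmas
variable {E : Type*} [DecidableEq E] {F : Set (Finset E)} {S : Finset E}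

/-- Domination: every ratio NTUmax/NTUmin is nearly dominated by a ratio TUmax/NTUmax. -/
lemma domI (hmf : MonopolyFree F) (hS : S ∈ F) :
    DomSR {r : ℝ | ∃ c : E → ℝ, (∀ e, 0 ≤ c e) ∧ IsCheapest F c S ∧
            0 < NTUmin F c S ∧ r = NTUmax F c S / NTUmin F c S}
          {r : ℝ | ∃ c : E → ℝ, (∀ e, 0 ≤ c e) ∧ IsCheapest F c S ∧
            0 < NTUmax F c S ∧ r = TUmax F c S / NTUmax F c S} := by
  rintro r ⟨c, hc, hch, hpos, rfl⟩ δ hδ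
  have hNne : (BidsNTU F c S).Nonempty := by
    by_contra h
    rw [Set.not_nonempty_iff_eq_empty] at h
    have : NTUmin F c S = 0 := by unfold NTUmin; rw [h]; simp [Real.sInf_empty]
    linarith
  have himgne : ((fun b => ∑ e ∈ S, b e) '' BidsNTU F c S).Nonempty := hNne.image _
  have hbddN := ntu_sum_bddAbove (S := S) hmf hc
  have hbbN : BddBelow ((fun b => ∑ e ∈ S, b e) '' BidsNTU F c S) := ntu_img_bddBelow hc
  have hmM : NTUmin F c S ≤ NTUmax F c S := csInf_le_csSup himgne hbbN hbddN
  have hM : 0 < NTUmax F c S := lt_of_lt_of_le hpos hmM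
  set m := NTUmin F c S with hm
  set M := NTUmax F c S with hMdef
  set ε := δ * m * m / M with hε
  have hε0 : 0 < ε := by positivity
  obtain ⟨x, hx, hxlt⟩ := exists_lt_of_csInf_lt himgne (show sInf _ < m + ε by
    rw [show sInf ((fun b => ∑ e ∈ S, b e) '' BidsNTU F c S) = m from rfl]; linarith)
  obtain ⟨bm, hbm, rfl⟩ := hx
  have hxm : m ≤ ∑ e ∈ S, bm e := csInf_le hbbN ⟨bm, hbm, rfl⟩
  have hbmTU : bm ∈ BidsTU F c S := ntu_subset_tu hc hbm
  have hx0 : 0 < ∑ e ∈ S, bm e := lt_of_lt_of_le hpos hxm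
  refine ⟨TUmax F c S / (∑ e ∈ S, bm e),
    ⟨pin S bm c, pin_nonneg hc (fun e he => hbmTU.1 e he), pin_cheapest hS hbmTU, ?_, ?_⟩, ?_⟩
  · rw [pin_NTUmax hbmTU]; exact hx0
  · rw [pin_NTUmax hbmTU, pin_TUmax]
  · have hTM : M ≤ TUmax F c S :=
      csSup_le_csSup (tu_sum_bddAbove hmf c) himgne
        (Set.image_mono (ntu_subset_tu hc))
    have key : M / m - M / (∑ e ∈ S, bm e) ≤ δ := by
      rw [div_sub_div _ _ (ne_of_gt hpos) (ne_of_gt hx0), div_le_iff₀ (by positivity)]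
      have h1 : (∑ e ∈ S, bm e) - m < ε := by linarith
      have h2 : M * ε = δ * m * m := by
        rw [hε]; field_simp
      nlinarith [mul_le_mul_of_nonneg_left (le_of_lt h1) (le_of_lt hM),
        mul_le_mul_of_nonneg_left hxm (mul_nonneg (le_of_lt hδ) (le_of_lt hpos))]
    have h3 : M / (∑ e ∈ S, bm e) ≤ TUmax F c S / (∑ e ∈ S, bm e) :=
      (div_le_div_iff_of_pos_right hx0).mpr hTM
    linarith

/-- Domination: every ratio NTUmin/TUmin is dominated by a ratio NTUmax/NTUmin. -/
lemma domII (hmf : MonopolyFree F) (hS : S ∈ F) :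
    DomSR {r : ℝ | ∃ c : E → ℝ, (∀ e, 0 ≤ c e) ∧ IsCheapest F c S ∧
            0 < TUmin F c S ∧ r = NTUmin F c S / TUmin F c S}
          {r : ℝ | ∃ c : E → ℝ, (∀ e, 0 ≤ c e) ∧ IsCheapest F c S ∧
            0 < NTUmin F c S ∧ r = NTUmax F c S / NTUmin F c S} := by
  rintro r ⟨c, hc, hch, hpos, rfl⟩ δ hδ
  set c₂ : E → ℝ := fun e => if e ∈ S then 0 else c e with hc₂def
  have hc₂ : ∀ e, 0 ≤ c₂ e := by
    intro e; rw [hc₂def]; dsimp only; split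
    · exact le_refl 0
    · exact hc e
  have hzero : ∀ e ∈ S, c₂ e = 0 := fun e he => if_pos he
  have hoff : ∀ e ∉ S, c₂ e = c e := fun e he => if_neg he
  have hsets : BidsNTU F c₂ S = BidsTU F c S := by
    rw [bidsNTU_eq_tu_of_zero hzero]
    exact bidsTU_congr hoff
  have hch₂ : IsCheapest F c₂ S := by
    refine ⟨hS, fun T hT => ?_⟩
    have h1 : ∑ e ∈ S, c₂ e = 0 := Finset.sum_eq_zero hzero
    rw [h1]
    exact Finset.sum_nonneg fun e _ => hc₂ e
  have hmin : NTUmin F c₂ S = TUmin F c S := by unfold NTUmin TUmin; rw [hsets]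
  have hmax : NTUmax F c₂ S = TUmax F c S := by unfold NTUmax TUmax; rw [hsets]
  refine ⟨TUmax F c S / TUmin F c S,
    ⟨c₂, hc₂, hch₂, by rw [hmin]; exact hpos, by rw [hmin, hmax]⟩, ?_⟩
  have hTne : (BidsTU F c S).Nonempty := by
    by_contra h
    rw [Set.not_nonempty_iff_eq_empty] at h
    have : TUmin F c S = 0 := by unfold TUmin; rw [h]; simp [Real.sInf_empty]
    linarith
  have himgne : ((fun b => ∑ e ∈ S, b e) '' BidsTU F c S).Nonempty := hTne.image _
  have hbddT := tu_sum_bddAbove (S := S) hmf c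
  have hle : NTUmin F c S ≤ TUmax F c S := by
    by_cases hN : (BidsNTU F c S).Nonempty
    · obtain ⟨b, hb⟩ := hN
      have h1 : NTUmin F c S ≤ ∑ e ∈ S, b e := csInf_le (ntu_img_bddBelow hc) ⟨b, hb, rfl⟩
      have h2 : ∑ e ∈ S, b e ≤ TUmax F c S := le_csSup hbddT ⟨b, ntu_subset_tu hc hb, rfl⟩
      linarith
    · rw [Set.not_nonempty_iff_eq_empty] at hN
      have h0 : NTUmin F c S = 0 := by unfold NTUmin; rw [hN]; simp [Real.sInf_empty]
      rw [h0]
      obtain ⟨b, hb⟩ := hTne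
      have h1 : ∑ e ∈ S, b e ≤ TUmax F c S := le_csSup hbddT ⟨b, hb, rfl⟩
      have h2 := tu_sum_nonneg hb
      linarith
  have hdiv : NTUmin F c S / TUmin F c S ≤ TUmax F c S / TUmin F c S :=
    (div_le_div_iff_of_pos_right hpos).mpr hle
  linarith

/-- Domination: every ratio TUmax/NTUmax is nearly dominated by a ratio NTUmin/TUmin. -/
lemma domIII (hmf : MonopolyFree F) (hS : S ∈ F) :
    DomSR {r : ℝ | ∃ c : E → ℝ, (∀ e, 0 ≤ c e) ∧ IsCheapest F c S ∧
            0 < NTUmax F c S ∧ r = TUmax F c S / NTUmax F c S}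
          {r : ℝ | ∃ c : E → ℝ, (∀ e, 0 ≤ c e) ∧ IsCheapest F c S ∧
            0 < TUmin F c S ∧ r = NTUmin F c S / TUmin F c S} := by
  rintro r ⟨c, hc, hch, hpos, rfl⟩ δ hδ
  have hNne : (BidsNTU F c S).Nonempty := by
    by_contra h
    rw [Set.not_nonempty_iff_eq_empty] at h
    have : NTUmax F c S = 0 := by unfold NTUmax; rw [h]; simp [Real.sSup_empty]
    linarith
  have hTne : (BidsTU F c S).Nonempty := hNne.mono (ntu_subset_tu hc)
  have himgN : ((fun b => ∑ e ∈ S, b e) '' BidsNTU F c S).Nonempty := hNne.image _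
  have himgT : ((fun b => ∑ e ∈ S, b e) '' BidsTU F c S).Nonempty := hTne.image _
  have hbddT := tu_sum_bddAbove (S := S) hmf c
  have hbddN := ntu_sum_bddAbove (S := S) hmf hc
  by_cases h0 : 0 < TUmin F c S
  · -- main branch
    have hm0M : TUmin F c S ≤ NTUmax F c S := by
      obtain ⟨b, hb⟩ := hNne
      have h1 : TUmin F c S ≤ ∑ e ∈ S, b e :=
        csInf_le tu_img_bddBelow ⟨b, ntu_subset_tu hc hb, rfl⟩
      have h2 : ∑ e ∈ S, b e ≤ NTUmax F c S := le_csSup hbddN ⟨b, hb, rfl⟩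
      linarith
    set ε := δ * NTUmax F c S with hε
    have hε0 : 0 < ε := by positivity
    obtain ⟨x, hx, hxlt⟩ := exists_lt_of_lt_csSup himgT (show TUmax F c S - ε < sSup _ by
      rw [show sSup ((fun b => ∑ e ∈ S, b e) '' BidsTU F c S) = TUmax F c S from rfl]
      linarith)
    obtain ⟨bs, hbs, rfl⟩ := hx
    have hx0 : 0 ≤ ∑ e ∈ S, bs e := tu_sum_nonneg hbs
    refine ⟨(∑ e ∈ S, bs e) / TUmin F c S,
      ⟨pin S bs c, pin_nonneg hc (fun e he => hbs.1 e he), pin_cheapest hS hbs, ?_, ?_⟩, ?_⟩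
    · rw [pin_TUmin]; exact h0
    · rw [pin_NTUmin hbs, pin_TUmin]
    · have hsub : TUmax F c S / NTUmax F c S - δ = (TUmax F c S - ε) / NTUmax F c S := by
        rw [sub_div, hε]
        congr 1
        field_simp
      rw [hsub]
      rcases le_or_gt (TUmax F c S - ε) 0 with hneg | hpos2
      · have h1 : (TUmax F c S - ε) / NTUmax F c S ≤ 0 :=
          div_nonpos_iff.mpr (Or.inr ⟨hneg, le_of_lt hpos⟩)
        have h2 : 0 ≤ (∑ e ∈ S, bs e) / TUmin F c S := div_nonneg hx0 (le_of_lt h0)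
        linarith
      · exact le_trans (div_le_div₀ hx0 (le_of_lt hxlt) h0 hm0M) (le_refl _)
  · -- degenerate branch : TUmin c = 0, forcing c = 0 on S and ratio 1
    have hge0 : 0 ≤ TUmin F c S :=
      le_csInf himgT (by rintro x ⟨b, hb, rfl⟩; exact tu_sum_nonneg hb)
    have hm0 : TUmin F c S = 0 := le_antisymm (not_lt.mp h0) hge0
    have hczero : ∀ e ∈ S, c e = 0 := by
      intro e he
      refine le_antisymm ?_ (hc e)
      refine le_of_forall_pos_le_add fun ε' hε' => ?_
      obtain ⟨x, hx, hxlt⟩ := exists_lt_of_csInf_lt himgT (show sInf _ < ε' by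
        rw [show sInf ((fun b => ∑ e ∈ S, b e) '' BidsTU F c S) = TUmin F c S from rfl, hm0]
        linarith)
      obtain ⟨b, hb, rfl⟩ := hx
      obtain ⟨T, hT, heT, hsum⟩ := hb.2.2 e he
      have h1 : c e ≤ ∑ e' ∈ S \ T, c e' :=
        Finset.single_le_sum (fun e' _ => hc e') (Finset.mem_sdiff.mpr ⟨he, heT⟩)
      have h2 : ∑ e' ∈ S \ T, c e' ≤ ∑ e' ∈ T \ S, c e' := (cheapest_iff hS).mp hch T hT
      have h4 : ∑ e' ∈ S \ T, b e' ≤ ∑ e' ∈ S, b e' :=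
        Finset.sum_le_sum_of_subset_of_nonneg (Finset.sdiff_subset)
          (fun e' he' _ => hb.1 e' he')
      linarith
    have hNT : BidsNTU F c S = BidsTU F c S := bidsNTU_eq_tu_of_zero hczero
    have hmax_eq : NTUmax F c S = TUmax F c S := by unfold NTUmax TUmax; rw [hNT]
    have hr1 : TUmax F c S / NTUmax F c S = 1 := by
      rw [hmax_eq]; exact div_self (by rw [← hmax_eq]; exact ne_of_gt hpos)
    -- fallback construction
    have hFB := fallback_exists (S := S) (F := F) hmf
    have hone : ∀ x ∈ (fun b => ∑ e ∈ S, b e) '' BidsTU F (cFB S) S, (1:ℝ) ≤ x := by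
      rintro x ⟨b, hb, rfl⟩
      by_contra hlt1
      push_neg at hlt1
      have key : ∀ e ∈ S, ∃ T ∈ F, e ∉ T ∧ T \ S = ∅ := by
        intro e he
        obtain ⟨T, hT, heT, hsum⟩ := hb.2.2 e he
        refine ⟨T, hT, heT, ?_⟩
        rw [cFB_sum] at hsum
        have h4 : ∑ e' ∈ S \ T, b e' ≤ ∑ e' ∈ S, b e' :=
          Finset.sum_le_sum_of_subset_of_nonneg (Finset.sdiff_subset)
            (fun e' he' _ => hb.1 e' he')
        have hcard : ((T \ S).card : ℝ) < 1 := by linarith [hsum ▸ h4]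
        have : (T \ S).card = 0 := by exact_mod_cast Nat.lt_one_iff.mp (by exact_mod_cast hcard)
        exact Finset.card_eq_zero.mp this
      obtain ⟨x', hx', hposx⟩ := exists_lt_of_lt_csSup himgN (show (0:ℝ) < sSup _ by
        rw [show sSup ((fun b => ∑ e ∈ S, b e) '' BidsNTU F c S) = NTUmax F c S from rfl]
        exact hpos)
      obtain ⟨b'', hb'', rfl⟩ := hx'
      have hz : ∀ e ∈ S, b'' e = 0 := by
        intro e he
        obtain ⟨T, hT, heT, hTS⟩ := key e he
        have h5 : ∑ e' ∈ S \ T, b'' e' ≤ ∑ e' ∈ T \ S, c e' := hb''.2.1 T hT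
        rw [hTS, Finset.sum_empty] at h5
        have h6 : b'' e ≤ ∑ e' ∈ S \ T, b'' e' :=
          Finset.single_le_sum
            (fun e' he' => le_trans (hc e') (hb''.1 e' (Finset.mem_sdiff.mp he').1))
            (Finset.mem_sdiff.mpr ⟨he, heT⟩)
        have h7 : 0 ≤ b'' e := le_trans (hc e) (hb''.1 e he)
        linarith
      have : ∑ e ∈ S, b'' e = 0 := Finset.sum_eq_zero hz
      linarith
    have hTUminFB : (1:ℝ) ≤ TUmin F (cFB S) S := le_csInf (hFB.image _) hone
    have hNTUminFB : NTUmin F (cFB S) S = TUmin F (cFB S) S := by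
      unfold NTUmin TUmin
      rw [bidsNTU_eq_tu_of_zero (c := cFB S) (fun e he => by simp [cFB, he])]
    refine ⟨1, ⟨cFB S, cFB_nonneg, cFB_cheapest hS, by linarith, ?_⟩, ?_⟩
    · rw [hNTUminFB]
      exact (div_self (by linarith)).symm
    · rw [hr1]; linarith

end DomLemmas

theorem sup_ratios_eq {E : Type*} [DecidableEq E] (F : Set (Finset E)) (S : Finset E)
    (hmf : MonopolyFree F) (hS : S ∈ F) :
    sSup {r : ℝ | ∃ c : E → ℝ, (∀ e, 0 ≤ c e) ∧ IsCheapest F c S ∧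
          0 < NTUmax F c S ∧ r = TUmax F c S / NTUmax F c S} =
      sSup {r : ℝ | ∃ c : E → ℝ, (∀ e, 0 ≤ c e) ∧ IsCheapest F c S ∧
          0 < NTUmin F c S ∧ r = NTUmax F c S / NTUmin F c S} ∧
    sSup {r : ℝ | ∃ c : E → ℝ, (∀ e, 0 ≤ c e) ∧ IsCheapest F c S ∧
          0 < NTUmin F c S ∧ r = NTUmax F c S / NTUmin F c S} =
      sSup {r : ℝ | ∃ c : E → ℝ, (∀ e, 0 ≤ c e) ∧ IsCheapest F c S ∧
          0 < TUmin F c S ∧ r = NTUmin F c S / TUmin F c S} := by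
  exact sup_cycle (domIII hmf hS) (domII hmf hS) (domI hmf hS)
end

section
/- For any monopoly-free set system (E,F) with |E| = n, any nonnegative cost vector c, and any cheapest feasible set S, it holds that TUmax(c,S) ≤ n·TUmin(c,S); in fact TUmax(c,S) ≤ |S|·TUmin(c,S). -/
open Finset

/-!
For two TU bid vectors `b`, `b'` and `e ∈ S`, condition (3) for `b'` supplies a feasible `T ∌ e`
with `b'(S \ T) = c(T \ S)`, and conditions (1*), (2) for `b` give
`b e ≤ b(S \ T) ≤ c(T \ S) = b'(S \ T) ≤ b'(S)`. Summing over `e ∈ S` yields `b(S) ≤ |S| · b'(S)`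
for any two bid vectors.
-/

theorem Real.sSup_le_mul_sInf {A : Set ℝ} {k : ℝ} (hk : 0 ≤ k)
    (h : ∀ x ∈ A, ∀ y ∈ A, x ≤ k * y) : sSup A ≤ k * sInf A := by
  rcases A.eq_empty_or_nonempty with rfl | hA
  · simp
  refine csSup_le hA fun x hx => ?_
  rw [← smul_eq_mul, ← Real.sInf_smul_of_nonneg hk]
  refine le_csInf hA.smul_set ?_
  rintro _ ⟨y, hy, rfl⟩
  exact h x hx y hy

section BidsTU

variable {E : Type*} [DecidableEq E] {F : Set (Finset E)} {c : E → ℝ} {S : Finset E}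
  {b b' : E → ℝ}

theorem sum_nonneg_of_mem_bidsTU (hb : b ∈ BidsTU F c S) : 0 ≤ ∑ e ∈ S, b e :=
  sum_nonneg hb.1

theorem le_sum_of_mem_bidsTU (hb : b ∈ BidsTU F c S) (hb' : b' ∈ BidsTU F c S) {e : E}
    (he : e ∈ S) : b e ≤ ∑ e' ∈ S, b' e' := by
  obtain ⟨T, hT, heT, htight⟩ := hb'.2.2 e he
  calc b e ≤ ∑ e' ∈ S \ T, b e' :=
        single_le_sum (fun i hi => hb.1 i (mem_sdiff.mp hi).1) (mem_sdiff.mpr ⟨he, heT⟩)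
    _ ≤ ∑ e' ∈ T \ S, c e' := hb.2.1 T hT
    _ = ∑ e' ∈ S \ T, b' e' := htight.symm
    _ ≤ ∑ e' ∈ S, b' e' :=
        sum_le_sum_of_subset_of_nonneg sdiff_subset fun i hi _ => hb'.1 i hi

theorem sum_le_card_mul_sum_of_mem_bidsTU (hb : b ∈ BidsTU F c S) (hb' : b' ∈ BidsTU F c S) :
    ∑ e ∈ S, b e ≤ S.card * ∑ e ∈ S, b' e := by
  simpa using sum_le_sum fun e he => le_sum_of_mem_bidsTU hb hb' he

variable (F c S)

theorem TUmin_nonneg : 0 ≤ TUmin F c S :=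
  Real.sInf_nonneg <| by
    rintro _ ⟨b, hb, rfl⟩
    exact sum_nonneg_of_mem_bidsTU hb

theorem TUmax_le_card_mul_TUmin : TUmax F c S ≤ S.card * TUmin F c S :=
  Real.sSup_le_mul_sInf (Nat.cast_nonneg _) <| by
    rintro _ ⟨b, hb, rfl⟩ _ ⟨b', hb', rfl⟩
    exact sum_le_card_mul_sum_of_mem_bidsTU hb hb'

end BidsTU

theorem tumax_le_card_mul_tumin_general {E : Type*} [Fintype E] [DecidableEq E]
    (F : Set (Finset E)) (c : E → ℝ) (S : Finset E) :
    TUmax F c S ≤ (Fintype.card E : ℝ) * TUmin F c S ∧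
      TUmax F c S ≤ (S.card : ℝ) * TUmin F c S := by
  have hS := TUmax_le_card_mul_TUmin F c S
  refine ⟨hS.trans ?_, hS⟩
  gcongr
  · exact TUmin_nonneg F c S
  · exact card_le_univ S

theorem tumax_le_card_mul_tumin {E : Type*} [Fintype E] [DecidableEq E]
    (F : Set (Finset E)) (c : E → ℝ) (S : Finset E) (hmf : MonopolyFree F)
    (hc : ∀ e, 0 ≤ c e) (hS : IsCheapest F c S) :
    TUmax F c S ≤ (Fintype.card E : ℝ) * TUmin F c S ∧
      TUmax F c S ≤ (S.card : ℝ) * TUmin F c S :=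
  tumax_le_card_mul_tumin_general F c S
end

section
/- For any path auction (a finite graph G with distinguished vertices s and t whose associated set system is monopoly-free), any nonnegative cost vector c on the edges, and any cheapest feasible set S, it holds that TUmax(c,S) ≤ 2·TUmin(c,S). -/
open Finset

/-- The set system of a path auction on a graph `G` with terminals `s` and `t`:
the ground set is the edge set of `G`, and the feasible sets are the sets of
edges of `G` containing the edge set of a path from `s` to `t`. -/
def PathSystem {V : Type*} (G : SimpleGraph V) (s t : V) : Set (Finset (Sym2 V)) :=
  {T | (↑T : Set (Sym2 V)) ⊆ G.edgeSet ∧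
       ∃ p : G.Walk s t, p.IsPath ∧ ∀ e ∈ p.edges, e ∈ T}


set_option linter.unusedSectionVars false
namespace PathAuctionAux

variable {V : Type*} [DecidableEq V] {G : SimpleGraph V}

lemma getVert_injOn {u v : V} (p : G.Walk u v) (hp : p.IsPath) :
    ∀ a, a ≤ p.length → ∀ b, b ≤ p.length → p.getVert a = p.getVert b → a = b := by
  induction p with
  | nil => intro a ha b hb _; simp at ha hb; omega
  | cons h q ih =>
    rename_i x y z hadj
    rw [SimpleGraph.Walk.cons_isPath_iff] at hp
    intro a ha b hb hab
    simp only [SimpleGraph.Walk.length_cons] at ha hb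
    match a, b with
    | 0, 0 => rfl
    | 0, Nat.succ b =>
      exfalso
      rw [SimpleGraph.Walk.getVert_zero, SimpleGraph.Walk.getVert_cons_succ] at hab
      exact hp.2 (SimpleGraph.Walk.mem_support_iff_exists_getVert.mpr ⟨b, hab.symm, by omega⟩)
    | Nat.succ a, 0 =>
      exfalso
      rw [SimpleGraph.Walk.getVert_zero, SimpleGraph.Walk.getVert_cons_succ] at hab
      exact hp.2 (SimpleGraph.Walk.mem_support_iff_exists_getVert.mpr ⟨a, hab, by omega⟩)
    | Nat.succ a, Nat.succ b =>
      rw [SimpleGraph.Walk.getVert_cons_succ, SimpleGraph.Walk.getVert_cons_succ] at hab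
      have := ih hp.1 a (by omega) b (by omega) hab
      omega

lemma mem_edges_iff {u v : V} (p : G.Walk u v) (e : Sym2 V) :
    e ∈ p.edges ↔ ∃ j, j < p.length ∧ e = s(p.getVert j, p.getVert (j+1)) := by
  induction p with
  | nil => simp
  | cons h q ih =>
    rename_i x y z hadj
    rw [SimpleGraph.Walk.edges_cons, List.mem_cons, ih]
    constructor
    · rintro (rfl | ⟨j, hj, rfl⟩)
      · exact ⟨0, by simp [SimpleGraph.Walk.getVert_cons_succ]⟩
      · exact ⟨j+1, by simp [SimpleGraph.Walk.getVert_cons_succ, hj]⟩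
    · rintro ⟨j, hj, rfl⟩
      match j with
      | 0 => left; simp [SimpleGraph.Walk.getVert_cons_succ]
      | Nat.succ j =>
        right
        refine ⟨j, by simpa using hj, by simp [SimpleGraph.Walk.getVert_cons_succ]⟩

end PathAuctionAux

namespace PathAuctionAux2
open SimpleGraph SimpleGraph.Walk
variable {V : Type*} [DecidableEq V] {G : SimpleGraph V} {s t : V}

/-- walk along `p` from `getVert a` to `getVert b`. -/
lemma pseg (p : G.Walk s t) :
    ∀ b a, a ≤ b → b ≤ p.length → ∃ w : G.Walk (p.getVert a) (p.getVert b),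
      ∀ e ∈ w.edges, ∃ j, a ≤ j ∧ j < b ∧ e = s(p.getVert j, p.getVert (j+1)) := by
  intro b
  induction b with
  | zero => intro a ha _; obtain rfl : a = 0 := by omega
            exact ⟨Walk.nil, by simp⟩
  | succ b ih =>
    intro a ha hbn
    rcases Nat.lt_or_ge a (b+1) with h | h
    · have hab : a ≤ b := by omega
      obtain ⟨w, hw⟩ := ih a hab (by omega)
      have hadj : G.Adj (p.getVert b) (p.getVert (b+1)) := p.adj_getVert_succ (by omega)
      refine ⟨w.concat hadj, ?_⟩
      intro e he
      simp only [Walk.edges_concat, List.concat_eq_append, List.mem_append, List.mem_singleton] at he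
      rcases he with he | he
      · obtain ⟨j, h1, h2, h3⟩ := hw e he
        exact ⟨j, h1, by omega, h3⟩
      · exact ⟨b, hab, by omega, he⟩
    · obtain rfl : a = b + 1 := by omega
      exact ⟨Walk.nil, by simp⟩
end PathAuctionAux2

namespace PathAuctionSplit
open SimpleGraph SimpleGraph.Walk
set_option maxHeartbeats 1000000
variable {V : Type*} [DecidableEq V] {G : SimpleGraph V} {s t : V}

lemma split (p : G.Walk s t) (hp : p.IsPath) (i : ℕ) (hi : i < p.length) :
    ∀ (N : ℕ) {u : V} (q : G.Walk u t), q.length ≤ N →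
    ((∃ m, m ≤ i ∧ u = p.getVert m) ∨ (∀ m, m ≤ p.length → u ≠ p.getVert m)) →
    s(p.getVert i, p.getVert (i+1)) ∉ q.edges →
    (∃ R, i + 1 ≤ R ∧ R ≤ p.length ∧
      ∃ (σ : G.Walk u (p.getVert R)) (post : G.Walk (p.getVert R) t),
        q = σ.append post ∧
        ∀ e ∈ σ.edges, ∀ j, j < p.length → e ≠ s(p.getVert j, p.getVert (j+1)))
    ∨ (∃ L R, L ≤ i ∧ i + 1 ≤ R ∧ R ≤ p.length ∧
      ∃ (pre : G.Walk u (p.getVert L)) (σ : G.Walk (p.getVert L) (p.getVert R))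
        (post : G.Walk (p.getVert R) t),
        q = pre.append (σ.append post) ∧
        ∀ e ∈ σ.edges, ∀ j, j < p.length → e ≠ s(p.getVert j, p.getVert (j+1))) := by
  have vinj := PathAuctionAux.getVert_injOn p hp
  intro N
  induction N with
  | zero =>
    intro u q hlen hu _
    exfalso
    have : q.length = 0 := by omega
    have hut : u = t := by
      cases q with
      | nil => rfl
      | cons h q' => simp [Walk.length_cons] at this
    have ht : u = p.getVert p.length := hut.trans (p.getVert_length).symm
    rcases hu with ⟨m, hm, hum⟩ | hoff
    · have := vinj m (by omega) p.length le_rfl (hum.symm.trans ht)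
      omega
    · exact hoff p.length le_rfl ht
  | succ N ih =>
    intro u q hlen hu he
    cases q with
    | nil =>
      exfalso
      have ht : t = p.getVert p.length := (p.getVert_length).symm
      rcases hu with ⟨m, hm, hum⟩ | hoff
      · have := vinj m (by omega) p.length le_rfl (hum.symm.trans ht)
        omega
      · exact hoff p.length le_rfl ht
    | @cons _ w _ hadj q' =>
      rw [Walk.edges_cons, List.mem_cons] at he
      push_neg at he
      obtain ⟨hne, he'⟩ := he
      have hlen' : q'.length ≤ N := by
        simp only [Walk.length_cons] at hlen; omega
      by_cases hw : ∃ m, m ≤ p.length ∧ w = p.getVert m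
      · obtain ⟨m, hmn, rfl⟩ := hw
        by_cases hmi : m ≤ i
        · -- w is low
          rcases ih q' hlen' (Or.inl ⟨m, hmi, rfl⟩) he' with ⟨R, hR1, hR2, σ', post, hq', hσ'⟩ |
            ⟨L, R, hL, hR1, hR2, pre', σ, post, hq', hσ⟩
          · refine Or.inr ⟨m, R, hmi, hR1, hR2, Walk.cons hadj Walk.nil, σ', post, ?_, hσ'⟩
            rw [hq']; simp [Walk.cons_append]
          · refine Or.inr ⟨L, R, hL, hR1, hR2, Walk.cons hadj pre', σ, post, ?_, hσ⟩
            rw [hq']; simp [Walk.cons_append]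
        · -- w is high : m ≥ i+1
          refine Or.inl ⟨m, by omega, hmn, Walk.cons hadj Walk.nil, q',
            by simp [Walk.cons_append], ?_⟩
          intro e heσ j hj heq
          simp only [Walk.edges_cons, Walk.edges_nil, List.mem_singleton] at heσ
          subst heσ
          rw [Sym2.eq_iff] at heq
          rcases hu with ⟨m', hm', rfl⟩ | hoff
          · rcases heq with ⟨h1, h2⟩ | ⟨h1, h2⟩
            · have e1 := vinj m' (by omega) j (by omega) h1
              have e2 := vinj m (by omega) (j+1) (by omega) h2
              have : j = i := by omega
              subst this
              exact hne (by rw [e1, e2])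
            · have e1 := vinj m' (by omega) (j+1) (by omega) h1
              have e2 := vinj m (by omega) j (by omega) h2
              omega
          · rcases heq with ⟨h1, _⟩ | ⟨h1, _⟩
            · exact hoff j (by omega) h1
            · exact hoff (j+1) (by omega) h1
      · -- w is off the path
        push_neg at hw
        rcases ih q' hlen' (Or.inr hw) he' with ⟨R, hR1, hR2, σ', post, hq', hσ'⟩ |
          ⟨L, R, hL, hR1, hR2, pre', σ, post, hq', hσ⟩
        · refine Or.inl ⟨R, hR1, hR2, Walk.cons hadj σ', post, ?_, ?_⟩
          · rw [hq']; simp [Walk.cons_append]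
          · intro e heσ j hj heq
            rw [Walk.edges_cons, List.mem_cons] at heσ
            rcases heσ with rfl | heσ
            · rw [Sym2.eq_iff] at heq
              rcases heq with ⟨_, h2⟩ | ⟨_, h2⟩
              · exact hw (j+1) (by omega) h2
              · exact hw j (by omega) h2
            · exact hσ' e heσ j hj heq
        · refine Or.inr ⟨L, R, hL, hR1, hR2, Walk.cons hadj pre', σ, post, ?_, hσ⟩
          rw [hq']; simp [Walk.cons_append]

end PathAuctionSplit

namespace PathAuctionJump
open SimpleGraph SimpleGraph.Walk
set_option maxHeartbeats 1000000
variable {V : Type*} [DecidableEq V] {G : SimpleGraph V} {s t : V}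

/-- The main jump lemma: given the reference path `p` and another path `q` from `s` to `t`
avoiding edge `i` of `p`, we can find an interval `[L, R)` of `p`-edge-indices containing `i`,
a set `σE` of edges of `q` that are not edges of `p`, such that
(1) there is an `s`-`t` walk using only `p`-edges outside `[L,R)` and edges of `σE`, and
(2) there is an `s`-`t` walk using only edges of `q` outside `σE` and `p`-edges inside `[L,R)`. -/
lemma jump (p : G.Walk s t) (hp : p.IsPath) (i : ℕ) (hi : i < p.length)
    (q : G.Walk s t) (hqp : q.IsPath)
    (hq : s(p.getVert i, p.getVert (i+1)) ∉ q.edges) :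
    ∃ L R, L ≤ i ∧ i + 1 ≤ R ∧ R ≤ p.length ∧
    ∃ σE : List (Sym2 V),
      (∀ e ∈ σE, e ∈ q.edges) ∧
      (∀ e ∈ σE, ∀ j, j < p.length → e ≠ s(p.getVert j, p.getVert (j+1))) ∧
      (∃ w1 : G.Walk s t, ∀ e ∈ w1.edges,
        (∃ j, (j < L ∨ R ≤ j) ∧ j < p.length ∧ e = s(p.getVert j, p.getVert (j+1))) ∨ e ∈ σE) ∧
      (∃ w2 : G.Walk s t, ∀ e ∈ w2.edges,
        (e ∈ q.edges ∧ e ∉ σE) ∨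
        (∃ j, L ≤ j ∧ j < R ∧ j < p.length ∧ e = s(p.getVert j, p.getVert (j+1)))) := by
  rcases PathAuctionSplit.split p hp i hi q.length q le_rfl
      (Or.inl ⟨0, Nat.zero_le _, (p.getVert_zero).symm⟩) hq with
    ⟨R, hR1, hR2, σ, post, hdec, hσ⟩ | ⟨L, R, hL, hR1, hR2, pre, σ, post, hdec, hσ⟩
  · -- σ starts at s itself (take L = 0)
    obtain ⟨wA, hwA⟩ := PathAuctionAux2.pseg p p.length R (by omega) le_rfl
    obtain ⟨wB, hwB⟩ := PathAuctionAux2.pseg p R 0 (by omega) hR2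
    refine ⟨0, R, Nat.zero_le _, hR1, hR2, σ.edges, ?_, hσ, ?_, ?_⟩
    · intro e he; rw [hdec, Walk.edges_append, List.mem_append]; exact Or.inl he
    · -- w1 : σ followed by the p-segment from R to the end
      refine ⟨(σ.append wA).copy rfl p.getVert_length, ?_⟩
      intro e he
      rw [Walk.edges_copy, Walk.edges_append, List.mem_append] at he
      rcases he with he | he
      · exact Or.inr he
      · obtain ⟨j, h1, h2, h3⟩ := hwA e he
        exact Or.inl ⟨j, Or.inr h1, by omega, h3⟩
    · -- w2 : the p-segment from 0 to R, followed by post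
      refine ⟨((wB.copy p.getVert_zero rfl).append post), ?_⟩
      have hnd : q.edges.Nodup := hqp.isTrail.edges_nodup
      rw [hdec, Walk.edges_append] at hnd
      have hdisj := List.disjoint_of_nodup_append hnd
      intro e he
      rw [Walk.edges_append, Walk.edges_copy, List.mem_append] at he
      rcases he with he | he
      · obtain ⟨j, h1, h2, h3⟩ := hwB e he
        exact Or.inr ⟨j, h1, h2, by omega, h3⟩
      · refine Or.inl ⟨?_, ?_⟩
        · rw [hdec, Walk.edges_append, List.mem_append]; exact Or.inr he
        · exact fun hc => hdisj hc he
  · -- general case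
    obtain ⟨wA, hwA⟩ := PathAuctionAux2.pseg p L 0 (Nat.zero_le _) (by omega)
    obtain ⟨wC, hwC⟩ := PathAuctionAux2.pseg p p.length R (by omega) le_rfl
    obtain ⟨wB, hwB⟩ := PathAuctionAux2.pseg p R L (by omega) hR2
    refine ⟨L, R, hL, hR1, hR2, σ.edges, ?_, hσ, ?_, ?_⟩
    · intro e he
      rw [hdec, Walk.edges_append, Walk.edges_append, List.mem_append, List.mem_append]
      exact Or.inr (Or.inl he)
    · -- w1 : p-segment to L, σ, p-segment from R
      refine ⟨((wA.copy p.getVert_zero rfl).append (σ.append wC)).copy rfl p.getVert_length, ?_⟩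
      intro e he
      rw [Walk.edges_copy, Walk.edges_append, Walk.edges_copy, Walk.edges_append,
        List.mem_append, List.mem_append] at he
      rcases he with he | he | he
      · obtain ⟨j, h1, h2, h3⟩ := hwA e he
        exact Or.inl ⟨j, Or.inl h2, by omega, h3⟩
      · exact Or.inr he
      · obtain ⟨j, h1, h2, h3⟩ := hwC e he
        exact Or.inl ⟨j, Or.inr h1, by omega, h3⟩
    · -- w2 : pre, p-segment from L to R, post
      refine ⟨pre.append (wB.append post), ?_⟩
      have hnd : q.edges.Nodup := hqp.isTrail.edges_nodup
      rw [hdec, Walk.edges_append, Walk.edges_append] at hnd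
      have hdisj1 := List.disjoint_of_nodup_append hnd
      have hnd2 := hnd.of_append_right
      have hdisj2 := List.disjoint_of_nodup_append hnd2
      intro e he
      rw [Walk.edges_append, Walk.edges_append, List.mem_append, List.mem_append] at he
      rcases he with he | he | he
      · refine Or.inl ⟨?_, ?_⟩
        · rw [hdec, Walk.edges_append, List.mem_append]; exact Or.inl he
        · intro hc
          exact hdisj1 he (by rw [List.mem_append]; exact Or.inl hc)
      · obtain ⟨j, h1, h2, h3⟩ := hwB e he
        exact Or.inr ⟨j, h1, h2, by omega, h3⟩
      · refine Or.inl ⟨?_, ?_⟩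
        · rw [hdec, Walk.edges_append, Walk.edges_append, List.mem_append, List.mem_append]
          exact Or.inr (Or.inr he)
        · exact fun hc => hdisj2 hc he

end PathAuctionJump

namespace PathAuctionCover
open Finset

lemma cover_aux (n : ℕ) (x y : ℕ → ℝ) (hx : ∀ j, j < n → 0 ≤ x j) (hy : ∀ j, j < n → 0 ≤ y j)
    (A B : ℕ → ℕ) (hAB : ∀ i, i < n → A i ≤ i ∧ i ≤ B i ∧ B i < n)
    (key : ∀ i, i < n → ∑ j ∈ Icc (A i) (B i), x j ≤ ∑ j ∈ Icc (A i) (B i), y j) :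
    ∀ d m, m < n → n - m ≤ d →
      ∃ i', (i' ∈ (range n).filter (fun i => A i ≤ m ∧ m ≤ B i)) ∧
        (∀ j ∈ (range n).filter (fun i => A i ≤ m ∧ m ≤ B i), B j ≤ B i') ∧
        ∑ j ∈ Ico m n, x j ≤ 2 * ∑ j ∈ Ico m n, y j + ∑ j ∈ Ico (A i') m, y j := by
  intro d
  induction d with
  | zero => intro m hm hd; omega
  | succ d ih =>
    intro m hm hd
    have hne : ((range n).filter (fun i => A i ≤ m ∧ m ≤ B i)).Nonempty :=
      ⟨m, by simp [mem_filter, hm, (hAB m hm).1, (hAB m hm).2.1]⟩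
    obtain ⟨i', hi'mem, hi'max⟩ := Finset.exists_max_image _ B hne
    refine ⟨i', hi'mem, hi'max, ?_⟩
    simp only [mem_filter, mem_range] at hi'mem
    obtain ⟨hi'n, hAi', hBi'⟩ := hi'mem
    set a := A i' with ha
    set r := B i' with hr
    have hrn : r < n := (hAB i' hi'n).2.2
    have ham : a ≤ m := hAi'
    have hmr : m ≤ r := hBi'
    -- the x-sum over [m, r] is bounded via the key inequality at i'
    have hxy : ∑ j ∈ Icc m r, x j ≤ ∑ j ∈ Ico a m, y j + ∑ j ∈ Icc m r, y j := by
      have h1 : ∑ j ∈ Icc m r, x j ≤ ∑ j ∈ Icc a r, x j := by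
        apply sum_le_sum_of_subset_of_nonneg
        · exact Icc_subset_Icc ham le_rfl
        · intro j hj _
          exact hx j (by simp only [mem_Icc] at hj; omega)
      have h2 := key i' hi'n
      have h3 : ∑ j ∈ Ico a m, y j + ∑ j ∈ Ico m (r+1), y j = ∑ j ∈ Ico a (r+1), y j := by
        apply sum_Ico_consecutive
        · exact ham
        · omega
      rw [Finset.Ico_add_one_right_eq_Icc] at h3
      calc ∑ j ∈ Icc m r, x j ≤ ∑ j ∈ Icc a r, x j := h1
        _ ≤ ∑ j ∈ Icc a r, y j := h2
        _ = ∑ j ∈ Ico a m, y j + ∑ j ∈ Icc m r, y j := h3.symm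
    have hsplit : ∑ j ∈ Ico m (r+1), x j + ∑ j ∈ Ico (r+1) n, x j = ∑ j ∈ Ico m n, x j :=
      sum_Ico_consecutive _ (by omega) (by omega)
    have hsplity : ∑ j ∈ Ico m (r+1), y j + ∑ j ∈ Ico (r+1) n, y j = ∑ j ∈ Ico m n, y j :=
      sum_Ico_consecutive _ (by omega) (by omega)
    have hicc : (Ico m (r+1)) = Icc m r := Finset.Ico_add_one_right_eq_Icc m r
    rcases Nat.lt_or_ge (r+1) n with hlt | hge
    · -- recursive case
      obtain ⟨i'', hi''mem, hi''max, hrec⟩ := ih (r+1) hlt (by omega)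
      have haim : m ≤ A i'' := by
        by_contra hcon
        push_neg at hcon
        simp only [mem_filter, mem_range] at hi''mem
        have : i'' ∈ (range n).filter (fun i => A i ≤ m ∧ m ≤ B i) := by
          simp only [mem_filter, mem_range]
          exact ⟨hi''mem.1, by omega, by omega⟩
        have := hi'max i'' this
        omega
      have hsub : ∑ j ∈ Ico (A i'') (r+1), y j ≤ ∑ j ∈ Icc m r, y j := by
        rw [← hicc]
        apply sum_le_sum_of_subset_of_nonneg
        · exact Ico_subset_Ico haim le_rfl
        · intro j hj _
          exact hy j (by simp only [mem_Ico] at hj; omega)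
      have hynn : 0 ≤ ∑ j ∈ Icc m r, y j := by
        apply sum_nonneg
        intro j hj
        exact hy j (by simp only [mem_Icc] at hj; omega)
      calc ∑ j ∈ Ico m n, x j = ∑ j ∈ Icc m r, x j + ∑ j ∈ Ico (r+1) n, x j := by
            rw [← hsplit, hicc]
        _ ≤ (∑ j ∈ Ico a m, y j + ∑ j ∈ Icc m r, y j) +
            (2 * ∑ j ∈ Ico (r+1) n, y j + ∑ j ∈ Ico (A i'') (r+1), y j) := by
            gcongr
        _ ≤ (∑ j ∈ Ico a m, y j + ∑ j ∈ Icc m r, y j) +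
            (2 * ∑ j ∈ Ico (r+1) n, y j + ∑ j ∈ Icc m r, y j) := by linarith
        _ = 2 * (∑ j ∈ Ico m (r+1), y j + ∑ j ∈ Ico (r+1) n, y j) + ∑ j ∈ Ico a m, y j := by
            rw [hicc]; ring
        _ = 2 * ∑ j ∈ Ico m n, y j + ∑ j ∈ Ico a m, y j := by rw [hsplity]
    · -- tail is empty
      have hempty : Ico (r+1) n = ∅ := by
        apply Ico_eq_empty
        omega
      have hxnn : 0 ≤ ∑ j ∈ Icc m r, y j := by
        apply sum_nonneg
        intro j hj
        exact hy j (by simp only [mem_Icc] at hj; omega)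
      calc ∑ j ∈ Ico m n, x j = ∑ j ∈ Icc m r, x j := by
            rw [← hsplit, hempty, sum_empty, add_zero, hicc]
        _ ≤ ∑ j ∈ Ico a m, y j + ∑ j ∈ Icc m r, y j := hxy
        _ ≤ ∑ j ∈ Ico a m, y j + 2 * ∑ j ∈ Ico m n, y j := by
            have : ∑ j ∈ Ico m n, y j = ∑ j ∈ Icc m r, y j := by
              rw [← hsplity, hempty, sum_empty, add_zero, hicc]
            rw [this]; linarith
        _ = 2 * ∑ j ∈ Ico m n, y j + ∑ j ∈ Ico a m, y j := by ring

lemma cover (n : ℕ) (x y : ℕ → ℝ) (hx : ∀ j, j < n → 0 ≤ x j) (hy : ∀ j, j < n → 0 ≤ y j)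
    (A B : ℕ → ℕ) (hAB : ∀ i, i < n → A i ≤ i ∧ i ≤ B i ∧ B i < n)
    (key : ∀ i, i < n → ∑ j ∈ Icc (A i) (B i), x j ≤ ∑ j ∈ Icc (A i) (B i), y j) :
    ∑ j ∈ range n, x j ≤ 2 * ∑ j ∈ range n, y j := by
  rcases Nat.eq_zero_or_pos n with rfl | hn
  · simp
  · obtain ⟨i', _, _, h⟩ := cover_aux n x y hx hy A B hAB key n 0 hn (by omega)
    rw [range_eq_Ico]
    simpa using h

end PathAuctionCover

namespace PathAuctionMain
open SimpleGraph SimpleGraph.Walk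
set_option maxHeartbeats 1600000

variable {V : Type*} [Fintype V] [DecidableEq V]

theorem pairwise_bound (G : SimpleGraph V) (s t : V)
    (c : Sym2 V → ℝ) (hc : ∀ e, 0 ≤ c e) (S : Finset (Sym2 V))
    (hSF : S ∈ PathSystem G s t)
    (b b' : Sym2 V → ℝ) (hb : b ∈ BidsTU (PathSystem G s t) c S)
    (hb' : b' ∈ BidsTU (PathSystem G s t) c S) :
    ∑ e ∈ S, b e ≤ 2 * ∑ e ∈ S, b' e := by
  classical
  obtain ⟨hSsub, p, hp, hpS⟩ := hSF
  set n := p.length with hn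
  set ped : ℕ → Sym2 V := fun j => s(p.getVert j, p.getVert (j+1)) with hped
  have vinj := PathAuctionAux.getVert_injOn p hp
  have pedmem : ∀ j, j < n → ped j ∈ S := by
    intro j hj
    exact hpS _ ((PathAuctionAux.mem_edges_iff p _).mpr ⟨j, hj, rfl⟩)
  have pedinj : ∀ j, j < n → ∀ j', j' < n → ped j = ped j' → j = j' := by
    intro j hj j' hj' hjj
    rw [hped, Sym2.eq_iff] at hjj
    rcases hjj with ⟨h1, _⟩ | ⟨h1, h2⟩
    · exact vinj j (by omega) j' (by omega) h1
    · have e1 := vinj j (by omega) (j'+1) (by omega) h1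
      have e2 := vinj (j+1) (by omega) j' (by omega) h2
      omega
  -- the set of path edges
  set P : Finset (Sym2 V) := (range n).image ped with hPdef
  have hPS : P ⊆ S := by
    intro e he
    rw [hPdef, mem_image] at he
    obtain ⟨j, hj, rfl⟩ := he
    exact pedmem j (by simpa using hj)
  have memP : ∀ e, e ∈ P ↔ ∃ j, j < n ∧ e = ped j := by
    intro e
    rw [hPdef, mem_image]
    constructor
    · rintro ⟨j, hj, rfl⟩; exact ⟨j, by simpa using hj, rfl⟩
    · rintro ⟨j, hj, rfl⟩; exact ⟨j, by simpa using hj, rfl⟩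
  -- bids vanish outside the path edges
  have vanish : ∀ bb : Sym2 V → ℝ, bb ∈ BidsTU (PathSystem G s t) c S →
      ∀ e ∈ S, e ∉ P → bb e = 0 := by
    intro bb hbb e heS heP
    have hTF : S.erase e ∈ PathSystem G s t := by
      refine ⟨?_, p, hp, ?_⟩
      · refine Set.Subset.trans ?_ hSsub
        intro f hf
        simp only [coe_erase, Set.mem_diff] at hf
        exact hf.1
      · intro f hf
        rw [mem_erase]
        refine ⟨?_, hpS f hf⟩
        rintro rfl
        obtain ⟨j, hj, rfl⟩ := (PathAuctionAux.mem_edges_iff p _).mp hf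
        exact heP ((memP _).mpr ⟨j, hj, rfl⟩)
    have hcon := hbb.2.1 _ hTF
    have h1 : S \ S.erase e = {e} := by
      ext f
      simp only [mem_sdiff, mem_erase, mem_singleton, not_and]
      constructor
      · rintro ⟨hfS, hf⟩
        by_contra hne
        exact hne (by_contra fun hne2 => hne2 (by tauto))
      · rintro rfl
        exact ⟨heS, fun h => absurd rfl h⟩
    have h2 : S.erase e \ S = ∅ := by
      rw [sdiff_eq_empty_iff_subset]
      exact erase_subset _ _
    rw [h1, h2] at hcon
    simp only [sum_singleton, sum_empty] at hcon
    exact le_antisymm hcon (hbb.1 e heS)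
  -- reduction of sums over S to sums over indices
  have sumred : ∀ bb : Sym2 V → ℝ, bb ∈ BidsTU (PathSystem G s t) c S →
      ∑ e ∈ S, bb e = ∑ j ∈ range n, bb (ped j) := by
    intro bb hbb
    have h1 : ∑ e ∈ P, bb e = ∑ e ∈ S, bb e := by
      apply sum_subset hPS
      intro e heS heP
      exact vanish bb hbb e heS heP
    rw [← h1, hPdef]
    apply sum_image
    intro j hj j' hj' h
    exact pedinj j (by simpa using hj) j' (by simpa using hj') h
  -- the key interval lemma
  have star : ∀ i, ∃ LR : ℕ × ℕ, i < n →
      LR.1 ≤ i ∧ i ≤ LR.2 ∧ LR.2 < n ∧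
      ∑ j ∈ Icc LR.1 LR.2, b (ped j) ≤ ∑ j ∈ Icc LR.1 LR.2, b' (ped j) := by
    intro i
    by_cases hi : i < n
    swap
    · exact ⟨(0,0), fun h => absurd h hi⟩
    -- tight witness for edge i
    obtain ⟨T, hTF, hiT, htight⟩ := hb'.2.2 (ped i) (pedmem i hi)
    obtain ⟨hTsub, q₀, hq₀p, hq₀T⟩ := hTF
    have hq : ped i ∉ q₀.edges := fun hmem => hiT (hq₀T _ hmem)
    obtain ⟨L, R, hL, hR1, hR2, σE, hσq, hσP, ⟨w1, hw1⟩, ⟨w2, hw2⟩⟩ :=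
      PathAuctionJump.jump p hp i hi q₀ hq₀p hq
    set K : Finset (Sym2 V) := (Icc L (R-1)).image ped with hKdef
    have memK : ∀ e, e ∈ K ↔ ∃ j, L ≤ j ∧ j < R ∧ e = ped j := by
      intro e
      rw [hKdef, mem_image]
      constructor
      · rintro ⟨j, hj, rfl⟩
        simp only [mem_Icc] at hj
        exact ⟨j, hj.1, by omega, rfl⟩
      · rintro ⟨j, hj1, hj2, rfl⟩
        exact ⟨j, by simp only [mem_Icc]; omega, rfl⟩
    have hKS : K ⊆ S := by
      intro e he
      obtain ⟨j, _, hj2, rfl⟩ := (memK e).mp he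
      exact pedmem j (by omega)
    have hKP : K ⊆ P := by
      intro e he
      obtain ⟨j, _, hj2, rfl⟩ := (memK e).mp he
      exact (memP _).mpr ⟨j, by omega, rfl⟩
    set σF : Finset (Sym2 V) := σE.toFinset with hσFdef
    have hσFT : σF ⊆ T := by
      intro e he
      rw [hσFdef, List.mem_toFinset] at he
      exact hq₀T _ (hσq _ he)
    have hσFnotP : ∀ e ∈ σF, ∀ j, j < n → e ≠ ped j := by
      intro e he
      rw [hσFdef, List.mem_toFinset] at he
      exact hσP e he
    have hσFK : ∀ e ∈ σF, e ∉ K := by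
      intro e he hK
      obtain ⟨j, _, hj2, rfl⟩ := (memK e).mp hK
      exact hσFnotP _ he j (by omega) rfl
    -- the detour set T_jump
    set Tj : Finset (Sym2 V) := (P \ K) ∪ σF with hTjdef
    have hTjF : Tj ∈ PathSystem G s t := by
      refine ⟨?_, w1.bypass, w1.bypass_isPath, ?_⟩
      · intro e he
        simp only [hTjdef, coe_union, coe_sdiff, Set.mem_union, Set.mem_diff, mem_coe] at he
        rcases he with ⟨heP, _⟩ | heσ
        · exact hSsub (hPS heP)
        · exact hTsub (hσFT heσ)
      · intro e he
        have he' := w1.edges_bypass_subset he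
        rcases hw1 e he' with ⟨j, hjout, hjn, rfl⟩ | heσ
        · rw [hTjdef, mem_union, mem_sdiff]
          left
          refine ⟨(memP _).mpr ⟨j, hjn, rfl⟩, ?_⟩
          intro hK
          obtain ⟨j', hj1, hj2, hjj⟩ := (memK _).mp hK
          have := pedinj j hjn j' (by omega) hjj
          omega
        · rw [hTjdef, mem_union]
          right
          rw [hσFdef, List.mem_toFinset]
          exact heσ
    have hKTj : ∀ e ∈ K, e ∉ Tj := by
      intro e he hTj
      rw [hTjdef, mem_union, mem_sdiff] at hTj
      rcases hTj with ⟨_, h⟩ | h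
      · exact h he
      · exact hσFK e h he
    -- the spliced set T tilde
    set Tt : Finset (Sym2 V) := (T \ σF) ∪ K with hTtdef
    have hTtF : Tt ∈ PathSystem G s t := by
      refine ⟨?_, w2.bypass, w2.bypass_isPath, ?_⟩
      · intro e he
        simp only [hTtdef, coe_union, coe_sdiff, Set.mem_union, Set.mem_diff, mem_coe] at he
        rcases he with ⟨heT, _⟩ | heK
        · exact hTsub heT
        · exact hSsub (hKS heK)
      · intro e he
        have he' := w2.edges_bypass_subset he
        rcases hw2 e he' with ⟨heq, heσ⟩ | ⟨j, hj1, hj2, _, rfl⟩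
        · rw [hTtdef, mem_union, mem_sdiff]
          left
          refine ⟨hq₀T _ heq, ?_⟩
          rw [hσFdef, List.mem_toFinset]
          exact heσ
        · rw [hTtdef, mem_union]
          right
          exact (memK _).mpr ⟨j, hj1, hj2, rfl⟩
    -- sum computations
    set X : Finset (Sym2 V) := (S \ T) \ K with hXdef
    have claim1 : ∑ e ∈ S \ Tt, b' e = ∑ e ∈ X, b' e := by
      symm
      apply sum_subset
      · intro e he
        rw [hXdef, mem_sdiff, mem_sdiff] at he
        rw [mem_sdiff, hTtdef, mem_union, mem_sdiff]
        refine ⟨he.1.1, ?_⟩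
        push_neg
        exact ⟨fun h => absurd h he.1.2, he.2⟩
      · intro e heS heX
        rw [mem_sdiff] at heS
        rw [hXdef, mem_sdiff, mem_sdiff] at heX
        push_neg at heX
        by_cases heT : e ∈ T
        · -- e must be in σF, hence off the path, hence b' e = 0
          have heσ : e ∈ σF := by
            by_contra hc
            exact heS.2 (by rw [hTtdef, mem_union, mem_sdiff]; exact Or.inl ⟨heT, hc⟩)
          apply vanish b' hb' e heS.1
          intro hP
          obtain ⟨j, hj, rfl⟩ := (memP _).mp hP
          exact hσFnotP _ heσ j hj rfl
        · exfalso
          have heK := heX ⟨heS.1, heT⟩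
          exact heS.2 (by rw [hTtdef, mem_union]; exact Or.inr heK)
    have claim2 : Tt \ S = (T \ S) \ σF := by
      ext e
      simp only [hTtdef, mem_sdiff, mem_union, mem_sdiff]
      constructor
      · rintro ⟨h1 | h1, h2⟩
        · exact ⟨⟨h1.1, h2⟩, h1.2⟩
        · exact absurd (hKS h1) h2
      · rintro ⟨⟨h1, h2⟩, h3⟩
        exact ⟨Or.inl ⟨h1, h3⟩, h2⟩
    have claim3 : ∑ e ∈ (T \ S) \ σF, c e + ∑ e ∈ (T \ S) ∩ σF, c e = ∑ e ∈ T \ S, c e := by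
      have : (T \ S) \ σF = (T \ S) \ ((T \ S) ∩ σF) := by
        ext e
        simp only [mem_sdiff, mem_inter]
        tauto
      rw [this]
      exact sum_sdiff (inter_subset_left)
    have claim4 : ∑ e ∈ X, b' e + ∑ e ∈ (S \ T) ∩ K, b' e = ∑ e ∈ S \ T, b' e := by
      have : X = (S \ T) \ ((S \ T) ∩ K) := by
        rw [hXdef]
        ext e
        simp only [mem_sdiff, mem_inter]
        tauto
      rw [this, add_comm]
      rw [add_comm] at *
      exact sum_sdiff (inter_subset_left)
    have claim5 : Tj \ S = (T \ S) ∩ σF := by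
      ext e
      simp only [hTjdef, mem_sdiff, mem_union, mem_inter]
      constructor
      · rintro ⟨h1 | h1, h2⟩
        · exact absurd (hPS h1.1) h2
        · exact ⟨⟨hσFT h1, h2⟩, h1⟩
      · rintro ⟨⟨h1, h2⟩, h3⟩
        exact ⟨Or.inr h3, h2⟩
    -- putting the inequalities together
    have con_b' := hb'.2.1 _ hTtF
    rw [claim1, claim2] at con_b'
    have step1 : ∑ e ∈ (T \ S) ∩ σF, c e ≤ ∑ e ∈ (S \ T) ∩ K, b' e := by
      have h1 : ∑ e ∈ (T \ S) ∩ σF, c e = ∑ e ∈ T \ S, c e - ∑ e ∈ (T \ S) \ σF, c e := by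
        linarith [claim3]
      rw [h1, ← htight]
      have h2 : ∑ e ∈ X, b' e ≤ ∑ e ∈ (T \ S) \ σF, c e := con_b'
      linarith [claim4]
    have step2 : ∑ e ∈ (S \ T) ∩ K, b' e ≤ ∑ e ∈ K, b' e := by
      apply sum_le_sum_of_subset_of_nonneg inter_subset_right
      intro e he _
      exact hb'.1 e (hKS he)
    have con_b := hb.2.1 _ hTjF
    have step3 : ∑ e ∈ K, b e ≤ ∑ e ∈ S \ Tj, b e := by
      apply sum_le_sum_of_subset_of_nonneg
      · intro e he
        rw [mem_sdiff]
        exact ⟨hKS he, hKTj e he⟩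
      · intro e he _
        rw [mem_sdiff] at he
        exact hb.1 e he.1
    have step4 : ∑ e ∈ Tj \ S, c e = ∑ e ∈ (T \ S) ∩ σF, c e := by rw [claim5]
    have final : ∑ e ∈ K, b e ≤ ∑ e ∈ K, b' e := by
      calc ∑ e ∈ K, b e ≤ ∑ e ∈ S \ Tj, b e := step3
        _ ≤ ∑ e ∈ Tj \ S, c e := con_b
        _ = ∑ e ∈ (T \ S) ∩ σF, c e := step4
        _ ≤ ∑ e ∈ (S \ T) ∩ K, b' e := step1
        _ ≤ ∑ e ∈ K, b' e := step2
    -- convert to index sums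
    have hconv : ∀ f : Sym2 V → ℝ, ∑ e ∈ K, f e = ∑ j ∈ Icc L (R-1), f (ped j) := by
      intro f
      rw [hKdef]
      apply sum_image
      intro j hj j' hj' h
      simp only [mem_coe, mem_Icc] at hj hj'
      exact pedinj j (by omega) j' (by omega) h
    refine ⟨(L, R-1), fun _ => ⟨hL, by omega, by omega, ?_⟩⟩
    rw [← hconv b, ← hconv b']
    exact final
  choose AB hAB using star
  have hcover := PathAuctionCover.cover n (fun j => b (ped j)) (fun j => b' (ped j))
    (fun j hj => hb.1 _ (pedmem j hj)) (fun j hj => hb'.1 _ (pedmem j hj))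
    (fun i => (AB i).1) (fun i => (AB i).2)
    (fun i hi => ⟨(hAB i hi).1, (hAB i hi).2.1, (hAB i hi).2.2.1⟩)
    (fun i hi => (hAB i hi).2.2.2)
  rw [sumred b hb, sumred b' hb']
  exact hcover

end PathAuctionMain


theorem path_tumax_le_two_tumin {V : Type*} [Fintype V] [DecidableEq V]
    (G : SimpleGraph V) (s t : V) (hmf : MonopolyFree (PathSystem G s t))
    (c : Sym2 V → ℝ) (hc : ∀ e, 0 ≤ c e) (S : Finset (Sym2 V))
    (hS : IsCheapest (PathSystem G s t) c S) :
    TUmax (PathSystem G s t) c S ≤ 2 * TUmin (PathSystem G s t) c S := by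
  classical
  set Im := ((fun b => ∑ e ∈ S, b e) '' BidsTU (PathSystem G s t) c S) with hIm
  have hmax : TUmax (PathSystem G s t) c S = sSup Im := rfl
  have hmin : TUmin (PathSystem G s t) c S = sInf Im := rfl
  have hnonneg : ∀ x ∈ Im, 0 ≤ x := by
    rintro x ⟨bb, hbb, rfl⟩
    exact Finset.sum_nonneg fun e he => hbb.1 e he
  have key : ∀ x ∈ Im, ∀ y ∈ Im, x ≤ 2 * y := by
    rintro x ⟨bb, hbb, rfl⟩ y ⟨bb', hbb', rfl⟩
    exact PathAuctionMain.pairwise_bound G s t c hc S hS.1 bb bb' hbb hbb'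
  rw [hmax, hmin]
  rcases Set.eq_empty_or_nonempty Im with hem | hne
  · rw [hem]
    simp [Real.sSup_empty, Real.sInf_empty]
  · have hinf0 : 0 ≤ sInf Im := Real.sInf_nonneg fun x hx => hnonneg x hx
    apply Real.sSup_le
    · intro x hx
      have hhalf : x / 2 ≤ sInf Im := by
        apply le_csInf hne
        intro y hy
        linarith [key x hx y hy]
      linarith
    · linarith
end

section
/- Let G = (V,E_G) be a finite simple graph with maximum degree Δ, and let A be a monotone, locally optimal allocation rule for the vertex-cover auction on G. Then for any nonnegative cost vector c : V → ℝ, the total payment of the threshold-payment mechanism determined by A satisfies p_M(c) = ∑_{v∈A(c)} t_v ≤ Δ·∑_{v∈V} c_v, where t_v is the threshold bid of v at the bid vector c. -/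
open Finset

/-- `T` is a vertex cover of the graph `G`. -/
def IsVertexCover {V : Type*} (G : SimpleGraph V) (T : Finset V) : Prop :=
  ∀ ⦃v w : V⦄, G.Adj v w → v ∈ T ∨ w ∈ T

/-- The vertex-cover set system of a graph `G`: the ground set is the vertex
set and the feasible sets are the vertex covers of `G`. -/
def VCSystem {V : Type*} (G : SimpleGraph V) : Set (Finset V) :=
  {T | IsVertexCover G T}

/-- An allocation rule is monotone if a losing agent stays losing when it
raises its bid. -/
def MonotoneRule {V : Type*} [DecidableEq V] (A : (V → ℝ) → Finset V) : Prop :=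
  ∀ (b : V → ℝ) (v : V) (x : ℝ), v ∉ A b → b v < x → v ∉ A (Function.update b v x)

/-- An allocation rule is locally optimal if a vertex bidding strictly more
than the total bid of its neighbours is never chosen. -/
def LocallyOptimal {V : Type*} [Fintype V] [DecidableEq V] (G : SimpleGraph V)
    [DecidableRel G.Adj] (A : (V → ℝ) → Finset V) : Prop :=
  ∀ (b : V → ℝ) (v : V), (∑ w ∈ G.neighborFinset v, b w) < b v → v ∉ A b

/-- The threshold bid of agent `v` at the bid vector `b`. -/
noncomputable def threshold {V : Type*} [DecidableEq V] (A : (V → ℝ) → Finset V)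
    (b : V → ℝ) (v : V) : ℝ :=
  sSup {x : ℝ | v ∈ A (Function.update b v x)}

/-- The total payment of the threshold-payment mechanism determined by `A`
on true costs `c`. -/
noncomputable def totalPayment {V : Type*} [DecidableEq V] (A : (V → ℝ) → Finset V)
    (c : V → ℝ) : ℝ :=
  ∑ v ∈ A c, threshold A c v

/-! Local optimality caps every threshold bid by the neighbourhood's bid; summing over the winners
and exchanging the order of summation counts each cost `c w` once per neighbour of `w`, that is at
most `Δ` times. -/

theorem SimpleGraph.sum_sum_neighborFinset_eq_sum_degree_nsmul {V M : Type*} [Fintype V]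
    [AddCommMonoid M] (G : SimpleGraph V) [DecidableRel G.Adj] (f : V → M) :
    ∑ v, ∑ w ∈ G.neighborFinset v, f w = ∑ w, G.degree w • f w := by
  rw [sum_comm' (t' := univ) (s' := fun w => G.neighborFinset w)
    fun v w => by simp [G.adj_comm]]
  simp only [sum_const, card_neighborFinset_eq_degree]

theorem SimpleGraph.sum_degree_nsmul_le_maxDegree_nsmul_sum {V M : Type*} [Fintype V]
    [AddCommMonoid M] [PartialOrder M] [IsOrderedAddMonoid M] (G : SimpleGraph V)
    [DecidableRel G.Adj] {f : V → M} (hf : ∀ v, 0 ≤ f v) :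
    ∑ w, G.degree w • f w ≤ G.maxDegree • ∑ w, f w := by
  rw [smul_sum]
  exact sum_le_sum fun w _ => nsmul_le_nsmul_left (hf w) (G.degree_le_maxDegree w)

/-- The nonnegativity of `B` guards against the junk value `sSup ∅ = 0`. -/
theorem threshold_le {V : Type*} [DecidableEq V] {A : (V → ℝ) → Finset V} {b : V → ℝ} {v : V}
    {B : ℝ} (hB : 0 ≤ B) (h : ∀ x, v ∈ A (Function.update b v x) → x ≤ B) :
    threshold A b v ≤ B :=
  Real.sSup_le h hB

theorem LocallyOptimal.threshold_le_sum_neighborFinset {V : Type*} [Fintype V] [DecidableEq V]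
    {G : SimpleGraph V} [DecidableRel G.Adj] {A : (V → ℝ) → Finset V} (hloc : LocallyOptimal G A)
    (b : V → ℝ) (v : V) (hb : 0 ≤ ∑ w ∈ G.neighborFinset v, b w) :
    threshold A b v ≤ ∑ w ∈ G.neighborFinset v, b w :=
  threshold_le hb fun x hx => by
    by_contra! hlt
    refine hloc _ v ?_ hx
    rwa [sum_update_of_notMem (G.notMem_neighborFinset_self v), Function.update_self]

theorem locally_optimal_payment_bound_general {V : Type*} [Fintype V] [DecidableEq V]
    (G : SimpleGraph V) [DecidableRel G.Adj] (A : (V → ℝ) → Finset V)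
    (hloc : LocallyOptimal G A) (c : V → ℝ) (hc : ∀ v, 0 ≤ c v) :
    totalPayment A c ≤ (G.maxDegree : ℝ) * ∑ v, c v := by
  have hN : ∀ v, 0 ≤ ∑ w ∈ G.neighborFinset v, c w := fun v => sum_nonneg fun w _ => hc w
  calc totalPayment A c ≤ ∑ v ∈ A c, ∑ w ∈ G.neighborFinset v, c w :=
        sum_le_sum fun v _ => hloc.threshold_le_sum_neighborFinset c v (hN v)
    _ ≤ ∑ v, ∑ w ∈ G.neighborFinset v, c w :=
        sum_le_sum_of_subset_of_nonneg (subset_univ _) fun v _ _ => hN v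
    _ = ∑ w, G.degree w • c w := G.sum_sum_neighborFinset_eq_sum_degree_nsmul c
    _ ≤ G.maxDegree • ∑ v, c v := G.sum_degree_nsmul_le_maxDegree_nsmul_sum hc
    _ = (G.maxDegree : ℝ) * ∑ v, c v := nsmul_eq_mul _ _

theorem locally_optimal_payment_bound {V : Type*} [Fintype V] [DecidableEq V]
    (G : SimpleGraph V) [DecidableRel G.Adj] (A : (V → ℝ) → Finset V)
    (hA : ∀ b, IsVertexCover G (A b)) (hmono : MonotoneRule A)
    (hloc : LocallyOptimal G A) (c : V → ℝ) (hc : ∀ v, 0 ≤ c v) :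
    totalPayment A c ≤ (G.maxDegree : ℝ) * ∑ v, c v :=
  locally_optimal_payment_bound_general G A hloc c hc
end

section
/- Let G = (V,E_G) be a finite simple graph with maximum degree Δ in which every vertex is incident to at least one edge, and let A be a monotone, locally optimal allocation rule for the vertex-cover auction on G. Then for every nonnegative cost vector c : V → ℝ and every minimum-cost vertex cover S of G with respect to c, the total payment of the threshold-payment mechanism determined by A satisfies p_M(c) ≤ 2Δ·NTUmin(c,S). -/
open Finset

section KeyLemma

open Finset

variable {V : Type*} [Fintype V] [DecidableEq V] (G : SimpleGraph V)

/-- A stable (independent) set. -/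
def Stab (X : Finset V) : Prop := ∀ ⦃x⦄, x ∈ X → ∀ ⦃y⦄, y ∈ X → ¬ G.Adj x y

open scoped Classical in
/-- The (open) neighbourhood of a set of vertices. -/
noncomputable def NBset (X : Finset V) : Finset V :=
  univ.filter fun y => y ∉ X ∧ ∃ x ∈ X, G.Adj x y

lemma mem_NBset {X : Finset V} {y : V} :
    y ∈ NBset G X ↔ y ∉ X ∧ ∃ x ∈ X, G.Adj x y := by
  classical
  simp [NBset]

lemma Stab.subset {X Y : Finset V} (hY : Stab G Y) (h : X ⊆ Y) : Stab G X :=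
  fun _ hx _ hy => hY (h hx) (h hy)

/-- Key combinatorial lemma: if every vertex of a graph without isolated
vertices lies in some maximum `d`-weight stable set, then every stable set
weighs at most its neighbourhood. -/
theorem key_stable (d : V → ℝ) (hd : ∀ v, 0 ≤ d v) (hiso : ∀ v : V, ∃ w, G.Adj v w)
    (H : ∀ v : V, ∃ J, Stab G J ∧ v ∈ J ∧
      ∀ X, Stab G X → ∑ x ∈ X, d x ≤ ∑ x ∈ J, d x) :
    ∀ X, Stab G X → ∑ x ∈ X, d x ≤ ∑ y ∈ NBset G X, d y := by
  classical
  set f : Finset V → ℝ := fun X => ∑ x ∈ X, d x - ∑ y ∈ NBset G X, d y with hf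
  -- the finite collection of stable sets
  set 𝒮 : Finset (Finset V) := univ.filter (fun X => Stab G X) with h𝒮
  have hmem𝒮 : ∀ {X : Finset V}, X ∈ 𝒮 ↔ Stab G X := by
    intro X; simp [h𝒮]
  have hempty : (∅ : Finset V) ∈ 𝒮 := by
    rw [hmem𝒮]; intro x hx; simp at hx
  obtain ⟨X₀, hX₀, hmax₀⟩ := 𝒮.exists_max_image f ⟨∅, hempty⟩
  set M : Finset (Finset V) := 𝒮.filter (fun Y => f X₀ ≤ f Y) with hM
  have hX₀M : X₀ ∈ M := by
    rw [hM, mem_filter]; exact ⟨hX₀, le_rfl⟩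
  obtain ⟨X, hXM, hminX⟩ := M.exists_min_image (fun Y => (NBset G Y).card) ⟨X₀, hX₀M⟩
  have hXstab : Stab G X := hmem𝒮.mp (mem_filter.mp hXM).1
  have hXmaxAll : ∀ Y, Stab G Y → f Y ≤ f X :=
    fun Y hY => le_trans (hmax₀ Y (hmem𝒮.mpr hY)) (mem_filter.mp hXM).2
  -- NBset G X must be empty
  have hNBempty : NBset G X = ∅ := by
    by_contra hne
    obtain ⟨y, hy⟩ := Finset.nonempty_of_ne_empty hne
    obtain ⟨hyX, x₀, hx₀X, hadj₀⟩ := (mem_NBset (G := G)).mp hy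
    obtain ⟨J, hJstab, hyJ, hJmax⟩ := H y
    -- the swapped set J* = (J \ NBset X) ∪ X is stable
    set Js : Finset V := (J \ NBset G X) ∪ X with hJs
    have hJsStab : Stab G Js := by
      intro a ha b hb hab
      have key : ∀ {p q : V}, p ∈ J \ NBset G X → q ∈ X → ¬ G.Adj q p := by
        intro p q hp hq hqp
        rcases mem_sdiff.mp hp with ⟨hpJ, hpNB⟩
        by_cases hpX : p ∈ X
        · exact hXstab hq hpX hqp
        · exact hpNB ((mem_NBset (G := G)).mpr ⟨hpX, q, hq, hqp⟩)
      rcases mem_union.mp ha with ha' | ha' <;> rcases mem_union.mp hb with hb' | hb'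
      · exact hJstab (mem_sdiff.mp ha').1 (mem_sdiff.mp hb').1 hab
      · exact key ha' hb' (G.adj_symm hab)
      · exact key hb' ha' hab
      · exact hXstab ha' hb' hab
    -- weight of J*
    have hXinterNB : ∀ {z : V}, z ∈ X → z ∉ NBset G X := by
      intro z hz hzNB; exact ((mem_NBset (G := G)).mp hzNB).1 hz
    have hJs_eq : Js = (J \ NBset G X) ∪ (X \ J) := by
      ext a
      simp only [hJs, mem_union, mem_sdiff]
      constructor
      · rintro (h | h)
        · exact Or.inl h
        · by_cases haJ : a ∈ J
          · exact Or.inl ⟨haJ, hXinterNB h⟩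
          · exact Or.inr ⟨h, haJ⟩
      · rintro (h | h)
        · exact Or.inl h
        · exact Or.inr h.1
    have hdisj : Disjoint (J \ NBset G X) (X \ J) := by
      rw [Finset.disjoint_left]
      intro a ha ha'
      exact (mem_sdiff.mp ha').2 (mem_sdiff.mp ha).1
    have hsumJs : ∑ x ∈ Js, d x = ∑ x ∈ J \ NBset G X, d x + ∑ x ∈ X \ J, d x := by
      rw [hJs_eq, sum_union hdisj]
    have hsplitJ : ∑ x ∈ J \ NBset G X, d x + ∑ x ∈ J ∩ NBset G X, d x = ∑ x ∈ J, d x := by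
      have : J \ NBset G X = J \ (J ∩ NBset G X) := by
        rw [Finset.sdiff_inter_self_left]
      rw [this]
      exact Finset.sum_sdiff (Finset.inter_subset_left)
    -- by maximality of J
    have hJsle : ∑ x ∈ Js, d x ≤ ∑ x ∈ J, d x := hJmax Js hJsStab
    have hdelta : ∑ x ∈ X \ J, d x ≤ ∑ x ∈ J ∩ NBset G X, d x := by linarith
    -- the intersection X₂
    set X₂ : Finset V := X ∩ J with hX₂
    have hX₂stab : Stab G X₂ := hXstab.subset G Finset.inter_subset_left
    have hsplitX : ∑ x ∈ X \ J, d x + ∑ x ∈ X₂, d x = ∑ x ∈ X, d x := by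
      have : X \ J = X \ (X ∩ J) := by rw [Finset.sdiff_inter_self_left]
      rw [hX₂, this]
      exact Finset.sum_sdiff (Finset.inter_subset_left)
    have hNBX₂sub : NBset G X₂ ⊆ (NBset G X) \ J := by
      intro z hz
      obtain ⟨hzX₂, x, hxX₂, hadj⟩ := (mem_NBset (G := G)).mp hz
      have hxX : x ∈ X := (mem_inter.mp hxX₂).1
      have hxJ : x ∈ J := (mem_inter.mp hxX₂).2
      have hzJ : z ∉ J := fun hzJ => hJstab hxJ hzJ hadj
      have hzX : z ∉ X := fun hzX => hXstab hxX hzX hadj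
      exact mem_sdiff.mpr ⟨(mem_NBset (G := G)).mpr ⟨hzX, x, hxX, hadj⟩, hzJ⟩
    have hsplitNB : ∑ x ∈ (NBset G X) \ J, d x + ∑ x ∈ NBset G X ∩ J, d x
        = ∑ x ∈ NBset G X, d x := by
      have : (NBset G X) \ J = (NBset G X) \ (NBset G X ∩ J) := by
        rw [Finset.sdiff_inter_self_left]
      rw [this]
      exact Finset.sum_sdiff (Finset.inter_subset_left)
    have hNBX₂le : ∑ x ∈ NBset G X₂, d x ≤ ∑ x ∈ (NBset G X) \ J, d x :=
      Finset.sum_le_sum_of_subset_of_nonneg hNBX₂sub (fun i _ _ => hd i)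
    have hIJcomm : ∑ x ∈ J ∩ NBset G X, d x = ∑ x ∈ NBset G X ∩ J, d x := by
      rw [Finset.inter_comm]
    -- f X₂ ≥ f X
    have hfX₂ : f X ≤ f X₂ := by
      simp only [hf]
      have h1 : ∑ x ∈ X₂, d x = ∑ x ∈ X, d x - ∑ x ∈ X \ J, d x := by linarith
      linarith
    -- X₂ is a maximizer with strictly smaller neighbourhood
    have hX₂M : X₂ ∈ M := by
      rw [hM, mem_filter]
      exact ⟨hmem𝒮.mpr hX₂stab, le_trans (mem_filter.mp hXM).2 hfX₂⟩
    have hcard : (NBset G X₂).card < (NBset G X).card := by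
      have hsub : NBset G X₂ ⊆ (NBset G X).erase y := by
        intro z hz
        have hz' := hNBX₂sub hz
        rcases mem_sdiff.mp hz' with ⟨hz1, hz2⟩
        refine mem_erase.mpr ⟨?_, hz1⟩
        rintro rfl; exact hz2 hyJ
      calc (NBset G X₂).card ≤ ((NBset G X).erase y).card := Finset.card_le_card hsub
        _ < (NBset G X).card := Finset.card_erase_lt_of_mem hy
    exact absurd (hminX X₂ hX₂M) (not_le.mpr hcard)
  -- X must then be empty, so the maximum of f is 0
  have hXempty : X = ∅ := by
    by_contra hne
    obtain ⟨x, hx⟩ := Finset.nonempty_of_ne_empty hne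
    obtain ⟨w, hw⟩ := hiso x
    have hwX : w ∉ X := fun hwX => hXstab hx hwX hw
    have : w ∈ NBset G X := (mem_NBset (G := G)).mpr ⟨hwX, x, hx, hw⟩
    rw [hNBempty] at this
    exact absurd this (Finset.notMem_empty w)
  have hfX0 : f X = 0 := by
    simp [hf, hXempty, NBset]
  intro Y hY
  have := hXmaxAll Y hY
  rw [hfX0] at this
  simp only [hf] at this
  linarith

end KeyLemma

section VCBridge

open Finset

variable {V : Type*} [Fintype V] [DecidableEq V] (G : SimpleGraph V)

lemma cover_compl_stab {T : Finset V} (hT : IsVertexCover G T) : Stab G (univ \ T) := by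
  intro x hx y hy hadj
  rcases hT hadj with h | h
  · exact (mem_sdiff.mp hx).2 h
  · exact (mem_sdiff.mp hy).2 h

lemma stab_compl_cover {X : Finset V} (hX : Stab G X) : IsVertexCover G (univ \ X) := by
  intro v w hadj
  by_cases hv : v ∈ X
  · by_cases hw : w ∈ X
    · exact absurd hadj (hX hv hw)
    · exact Or.inr (mem_sdiff.mpr ⟨mem_univ w, hw⟩)
  · exact Or.inl (mem_sdiff.mpr ⟨mem_univ v, hv⟩)

/-- Main bridge lemma: for every valid NTU bid vector `b`, the total cost of
all vertices is at most twice the total bid. -/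
lemma total_cost_le_two_bid
    (hG : ∀ v : V, ∃ w, G.Adj v w)
    (c : V → ℝ) (hc : ∀ v, 0 ≤ c v) (S : Finset V)
    (hS : IsCheapest (VCSystem G) c S) (b : V → ℝ)
    (hb : b ∈ BidsNTU (VCSystem G) c S) :
    ∑ v, c v ≤ 2 * ∑ v ∈ S, b v := by
  classical
  obtain ⟨hb1, hb2, hb3⟩ := hb
  have hScover : IsVertexCover G S := hS.1
  set d : V → ℝ := fun v => if v ∈ S then b v else c v with hd
  have hdnn : ∀ v, 0 ≤ d v := by
    intro v
    by_cases hv : v ∈ S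
    · simp only [hd, if_pos hv]; exact le_trans (hc v) (hb1 v hv)
    · simp only [hd, if_neg hv]; exact hc v
  have hdS : ∑ v ∈ S, d v = ∑ v ∈ S, b v :=
    Finset.sum_congr rfl (fun v hv => by simp [hd, if_pos hv])
  set B : ℝ := ∑ v ∈ S, b v with hB
  -- every cover has d-weight at least B
  have hsplitT : ∀ T : Finset V, ∑ v ∈ T, d v = ∑ v ∈ T ∩ S, b v + ∑ v ∈ T \ S, c v := by
    intro T
    have h1 : ∑ v ∈ T \ S, d v + ∑ v ∈ T ∩ S, d v = ∑ v ∈ T, d v := by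
      have : T \ S = T \ (T ∩ S) := by rw [Finset.sdiff_inter_self_left]
      rw [this]; exact Finset.sum_sdiff Finset.inter_subset_left
    have h2 : ∑ v ∈ T ∩ S, d v = ∑ v ∈ T ∩ S, b v :=
      Finset.sum_congr rfl (fun v hv => by simp [hd, if_pos (mem_inter.mp hv).2])
    have h3 : ∑ v ∈ T \ S, d v = ∑ v ∈ T \ S, c v :=
      Finset.sum_congr rfl (fun v hv => by simp [hd, if_neg (mem_sdiff.mp hv).2])
    linarith
  have hsplitS : ∀ T : Finset V, ∑ v ∈ S \ T, b v + ∑ v ∈ S ∩ T, b v = B := by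
    intro T
    have : S \ T = S \ (S ∩ T) := by rw [Finset.sdiff_inter_self_left]
    rw [hB, this]
    exact Finset.sum_sdiff Finset.inter_subset_left
  have hcoverB : ∀ T : Finset V, IsVertexCover G T → B ≤ ∑ v ∈ T, d v := by
    intro T hT
    have h2 := hb2 T hT
    have := hsplitS T
    rw [hsplitT T, Finset.inter_comm T S]
    linarith
  -- tight covers have d-weight exactly B
  have htightB : ∀ T : Finset V, (∑ e ∈ S \ T, b e = ∑ e ∈ T \ S, c e) →
      ∑ v ∈ T, d v = B := by
    intro T htight
    have := hsplitS T
    rw [hsplitT T, Finset.inter_comm T S]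
    linarith
  -- weight of a complement
  have hcompl : ∀ X : Finset V, ∑ v ∈ univ \ X, d v = ∑ v, d v - ∑ v ∈ X, d v := by
    intro X
    have := Finset.sum_sdiff (f := d) (Finset.subset_univ X)
    linarith
  -- hypothesis of the key lemma
  have H : ∀ v : V, ∃ J, Stab G J ∧ v ∈ J ∧
      ∀ X, Stab G X → ∑ x ∈ X, d x ≤ ∑ x ∈ J, d x := by
    intro v
    by_cases hv : v ∈ S
    · obtain ⟨T, hTF, hvT, htight⟩ := hb3 v hv
      have hTcover : IsVertexCover G T := hTF
      refine ⟨univ \ T, cover_compl_stab G hTcover, mem_sdiff.mpr ⟨mem_univ v, hvT⟩, ?_⟩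
      intro X hX
      have h1 : B ≤ ∑ w ∈ univ \ X, d w := hcoverB _ (stab_compl_cover G hX)
      have h2 : ∑ w ∈ T, d w = B := htightB T htight
      have h3 := hcompl X
      have h4 := hcompl T
      linarith
    · refine ⟨univ \ S, cover_compl_stab G hScover, mem_sdiff.mpr ⟨mem_univ v, hv⟩, ?_⟩
      intro X hX
      have h1 : B ≤ ∑ w ∈ univ \ X, d w := hcoverB _ (stab_compl_cover G hX)
      have h3 := hcompl X
      have h4 := hcompl S
      linarith
  -- apply the key lemma to univ \ S
  have hkey := key_stable G d hdnn hG H (univ \ S) (cover_compl_stab G hScover)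
  have hNBsub : NBset G (univ \ S) ⊆ S := by
    intro y hy
    have h1 := ((mem_NBset (G := G)).mp hy).1
    by_contra hyS
    exact h1 (mem_sdiff.mpr ⟨mem_univ y, hyS⟩)
  have hNBle : ∑ y ∈ NBset G (univ \ S), d y ≤ ∑ y ∈ S, d y :=
    Finset.sum_le_sum_of_subset_of_nonneg hNBsub (fun i _ _ => hdnn i)
  have hcVS : ∑ v ∈ univ \ S, c v ≤ B := by
    have h1 : ∑ v ∈ univ \ S, d v = ∑ v ∈ univ \ S, c v :=
      Finset.sum_congr rfl (fun v hv => by simp [hd, if_neg (mem_sdiff.mp hv).2])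
    rw [← h1]
    calc ∑ v ∈ univ \ S, d v ≤ ∑ y ∈ NBset G (univ \ S), d y := hkey
      _ ≤ ∑ y ∈ S, d y := hNBle
      _ = B := by rw [hdS]
  have hcS : ∑ v ∈ S, c v ≤ B := by
    rw [hB]; exact Finset.sum_le_sum hb1
  have hsplit := Finset.sum_sdiff (f := c) (Finset.subset_univ S)
  linarith

end VCBridge

section Construction

open Finset

variable {V : Type*} [Fintype V] [DecidableEq V] (G : SimpleGraph V)
variable (c : V → ℝ) (S : Finset V)

open scoped Classical in
/-- The finite set of vertex covers avoiding `v`. -/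
noncomputable def coversAvoiding (v : V) : Finset (Finset V) :=
  univ.filter fun T => IsVertexCover G T ∧ v ∉ T

lemma mem_coversAvoiding {v : V} {T : Finset V} :
    T ∈ coversAvoiding G v ↔ IsVertexCover G T ∧ v ∉ T := by
  classical
  simp [coversAvoiding]

lemma coversAvoiding_nonempty (v : V) : (coversAvoiding G v).Nonempty := by
  refine ⟨univ.erase v, (mem_coversAvoiding (G := G)).mpr ⟨?_, Finset.notMem_erase v univ⟩⟩
  intro x y hadj
  by_cases hx : x = v
  · subst hx
    exact Or.inr (Finset.mem_erase.mpr ⟨(G.ne_of_adj hadj).symm, mem_univ y⟩)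
  · exact Or.inl (Finset.mem_erase.mpr ⟨hx, mem_univ x⟩)

/-- Slack of constraint (2) for a given cover. -/
noncomputable def slackVC (b : V → ℝ) (T : Finset V) : ℝ :=
  ∑ e ∈ T \ S, c e - ∑ e ∈ S \ T, b e

/-- The amount by which `v`'s bid can be raised. -/
noncomputable def raiseVC (b : V → ℝ) (v : V) : ℝ :=
  (coversAvoiding G v).inf' (coversAvoiding_nonempty G v) (slackVC c S b)

noncomputable def stepVC (b : V → ℝ) (v : V) : V → ℝ :=
  Function.update b v (b v + raiseVC G c S b v)

noncomputable def fillVC : List V → (V → ℝ) → (V → ℝ)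
  | [], b => b
  | v :: l, b => fillVC l (stepVC G c S b v)

/-- Invariant: bids dominate costs and all covers have nonnegative slack. -/
def GoodVC (b : V → ℝ) : Prop :=
  (∀ v ∈ S, c v ≤ b v) ∧ ∀ T : Finset V, IsVertexCover G T → 0 ≤ slackVC c S b T

def TightVC (b : V → ℝ) (v : V) : Prop :=
  ∃ T : Finset V, IsVertexCover G T ∧ v ∉ T ∧ slackVC c S b T = 0

lemma raiseVC_nonneg {b : V → ℝ} (hb : GoodVC G c S b) (v : V) : 0 ≤ raiseVC G c S b v :=
  Finset.le_inf' _ _ (fun T hT => hb.2 T ((mem_coversAvoiding (G := G)).mp hT).1)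

lemma raiseVC_le {b : V → ℝ} {v : V} {T : Finset V} (hT : IsVertexCover G T) (hvT : v ∉ T) :
    raiseVC G c S b v ≤ slackVC c S b T :=
  Finset.inf'_le _ ((mem_coversAvoiding (G := G)).mpr ⟨hT, hvT⟩)

lemma slack_stepVC {b : V → ℝ} {v : V} (hv : v ∈ S) (T : Finset V) :
    slackVC c S (stepVC G c S b v) T
      = slackVC c S b T - (if v ∈ S \ T then raiseVC G c S b v else 0) := by
  unfold slackVC stepVC
  by_cases hvT : v ∈ S \ T
  · rw [if_pos hvT]
    rw [Finset.sum_update_of_mem hvT]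
    have : ∑ x ∈ (S \ T) \ {v}, b x = ∑ x ∈ S \ T, b x - b v := by
      have h := Finset.sum_sdiff (f := b) (Finset.singleton_subset_iff.mpr hvT)
      simp only [Finset.sum_singleton] at h
      linarith
    rw [this]; ring
  · rw [if_neg hvT]
    have : ∀ x ∈ S \ T, Function.update b v (b v + raiseVC G c S b v) x = b x := by
      intro x hx
      have : x ≠ v := by rintro rfl; exact hvT hx
      exact Function.update_of_ne this _ _
    rw [Finset.sum_congr rfl this]; ring

lemma good_stepVC {b : V → ℝ} (hb : GoodVC G c S b) {v : V} (hv : v ∈ S) :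
    GoodVC G c S (stepVC G c S b v) := by
  constructor
  · intro u hu
    by_cases huv : u = v
    · subst huv
      unfold stepVC
      rw [Function.update_self]
      have := raiseVC_nonneg G c S hb u
      have := hb.1 u hu
      linarith
    · unfold stepVC
      rw [Function.update_of_ne huv]
      exact hb.1 u hu
  · intro T hT
    rw [slack_stepVC G c S hv T]
    by_cases hvT : v ∈ S \ T
    · rw [if_pos hvT]
      have h1 := raiseVC_le G c S (b := b) hT (mem_sdiff.mp hvT).2
      linarith
    · rw [if_neg hvT]
      have := hb.2 T hT
      linarith

lemma tight_stepVC_self {b : V → ℝ} (hb : GoodVC G c S b) {v : V} (hv : v ∈ S) :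
    TightVC G c S (stepVC G c S b v) v := by
  obtain ⟨T₀, hT₀mem, hT₀eq⟩ :=
    Finset.exists_mem_eq_inf' (coversAvoiding_nonempty G v) (slackVC c S b)
  obtain ⟨hT₀cover, hvT₀⟩ := (mem_coversAvoiding (G := G)).mp hT₀mem
  refine ⟨T₀, hT₀cover, hvT₀, ?_⟩
  rw [slack_stepVC G c S hv T₀, if_pos (mem_sdiff.mpr ⟨hv, hvT₀⟩)]
  have : raiseVC G c S b v = slackVC c S b T₀ := hT₀eq
  linarith

lemma tight_stepVC_pres {b : V → ℝ} (hb : GoodVC G c S b) {v : V} (hv : v ∈ S)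
    {u : V} (hu : TightVC G c S b u) : TightVC G c S (stepVC G c S b v) u := by
  obtain ⟨T, hTcover, huT, hTeq⟩ := hu
  refine ⟨T, hTcover, huT, ?_⟩
  rw [slack_stepVC G c S hv T]
  by_cases hvT : v ∈ S \ T
  · rw [if_pos hvT]
    have h1 := raiseVC_le G c S (b := b) hTcover (mem_sdiff.mp hvT).2
    have h2 := raiseVC_nonneg G c S hb v
    rw [hTeq] at h1
    linarith
  · rw [if_neg hvT]; linarith

lemma fillVC_spec : ∀ (l : List V) (b : V → ℝ), (∀ v ∈ l, v ∈ S) → GoodVC G c S b →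
    GoodVC G c S (fillVC G c S l b)
      ∧ (∀ u, TightVC G c S b u → TightVC G c S (fillVC G c S l b) u)
      ∧ (∀ v ∈ l, TightVC G c S (fillVC G c S l b) v) := by
  intro l
  induction l with
  | nil =>
      intro b _ hb
      exact ⟨hb, fun u hu => hu, fun v hv => by simp at hv⟩
  | cons v l ih =>
      intro b hl hb
      have hv : v ∈ S := hl v List.mem_cons_self
      have hb' : GoodVC G c S (stepVC G c S b v) := good_stepVC G c S hb hv
      obtain ⟨hg, hpres, hnew⟩ := ih (stepVC G c S b v)
        (fun w hw => hl w (List.mem_cons_of_mem v hw)) hb'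
      refine ⟨hg, ?_, ?_⟩
      · intro u hu
        exact hpres u (tight_stepVC_pres G c S hb hv hu)
      · intro w hw
        rcases List.mem_cons.mp hw with rfl | hw'
        · exact hpres w (tight_stepVC_self G c S hb hv)
        · exact hnew w hw'

/-- `BidsNTU` is nonempty when `S` is a cheapest vertex cover. -/
lemma bidsNTU_nonempty (hS : IsCheapest (VCSystem G) c S) :
    (BidsNTU (VCSystem G) c S).Nonempty := by
  classical
  have hinit : GoodVC G c S c := by
    constructor
    · intro v _; exact le_rfl
    · intro T hT
      have h := hS.2 T hT
      unfold slackVC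
      have h1 : ∑ v ∈ S \ T, c v + ∑ v ∈ S ∩ T, c v = ∑ v ∈ S, c v := by
        have : S \ T = S \ (S ∩ T) := by rw [Finset.sdiff_inter_self_left]
        rw [this]; exact Finset.sum_sdiff Finset.inter_subset_left
      have h2 : ∑ v ∈ T \ S, c v + ∑ v ∈ T ∩ S, c v = ∑ v ∈ T, c v := by
        have : T \ S = T \ (T ∩ S) := by rw [Finset.sdiff_inter_self_left]
        rw [this]; exact Finset.sum_sdiff Finset.inter_subset_left
      have h3 : ∑ v ∈ S ∩ T, c v = ∑ v ∈ T ∩ S, c v := by rw [Finset.inter_comm]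
      linarith
  obtain ⟨hgood, _, htight⟩ :=
    fillVC_spec G c S S.toList c (fun v hv => Finset.mem_toList.mp hv) hinit
  set b := fillVC G c S S.toList c with hbdef
  refine ⟨b, hgood.1, ?_, ?_⟩
  · intro T hT
    have := hgood.2 T hT
    unfold slackVC at this
    linarith
  · intro v hv
    obtain ⟨T, hTcover, hvT, heq⟩ := htight v (Finset.mem_toList.mpr hv)
    refine ⟨T, hTcover, hvT, ?_⟩
    unfold slackVC at heq
    linarith

end Construction

section Mechanism

open Finset

variable {V : Type*} [Fintype V] [DecidableEq V] (G : SimpleGraph V) [DecidableRel G.Adj]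

lemma threshold_le_nbr_sum (A : (V → ℝ) → Finset V) (hloc : LocallyOptimal G A)
    (c : V → ℝ) (hc : ∀ v, 0 ≤ c v) (v : V) :
    threshold A c v ≤ ∑ w ∈ G.neighborFinset v, c w := by
  have hnn : 0 ≤ ∑ w ∈ G.neighborFinset v, c w :=
    Finset.sum_nonneg (fun w _ => hc w)
  apply Real.sSup_le _ hnn
  intro x hx
  by_contra hlt
  push_neg at hlt
  have hsum : ∑ w ∈ G.neighborFinset v, (Function.update c v x) w
      = ∑ w ∈ G.neighborFinset v, c w := by
    apply Finset.sum_congr rfl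
    intro w hw
    have hadj : G.Adj v w := by simpa using hw
    exact Function.update_of_ne (G.ne_of_adj hadj).symm _ _
  have hkey : (∑ w ∈ G.neighborFinset v, (Function.update c v x) w)
      < (Function.update c v x) v := by
    rw [hsum, Function.update_self]
    exact hlt
  exact (hloc (Function.update c v x) v hkey) hx

lemma payment_le_maxdeg_cost (A : (V → ℝ) → Finset V) (hloc : LocallyOptimal G A)
    (c : V → ℝ) (hc : ∀ v, 0 ≤ c v) :
    totalPayment A c ≤ (G.maxDegree : ℝ) * ∑ v, c v := by
  have h1 : totalPayment A c ≤ ∑ v ∈ A c, ∑ w ∈ G.neighborFinset v, c w :=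
    Finset.sum_le_sum (fun v _ => threshold_le_nbr_sum G A hloc c hc v)
  have h2 : ∑ v ∈ A c, ∑ w ∈ G.neighborFinset v, c w
      ≤ ∑ v, ∑ w ∈ G.neighborFinset v, c w :=
    Finset.sum_le_sum_of_subset_of_nonneg (Finset.subset_univ _)
      (fun i _ _ => Finset.sum_nonneg (fun w _ => hc w))
  have h3 : ∑ v, ∑ w ∈ G.neighborFinset v, c w = ∑ w, (G.degree w : ℝ) * c w := by
    have hform : ∀ v : V, ∑ w ∈ G.neighborFinset v, c w
        = ∑ w, if G.Adj v w then c w else 0 := by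
      intro v
      rw [SimpleGraph.neighborFinset_eq_filter, Finset.sum_filter]
    calc ∑ v, ∑ w ∈ G.neighborFinset v, c w
        = ∑ v, ∑ w, if G.Adj v w then c w else 0 := Finset.sum_congr rfl (fun v _ => hform v)
      _ = ∑ w, ∑ v, if G.Adj v w then c w else 0 := Finset.sum_comm
      _ = ∑ w, (G.degree w : ℝ) * c w := by
          apply Finset.sum_congr rfl
          intro w _
          rw [Finset.sum_ite, Finset.sum_const, Finset.sum_const_zero, add_zero]
          have hfil : univ.filter (fun v => G.Adj v w) = G.neighborFinset w := by
            rw [SimpleGraph.neighborFinset_eq_filter]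
            apply Finset.filter_congr
            intro v _
            simp [SimpleGraph.adj_comm]
          rw [hfil, nsmul_eq_mul]
          rfl
  have h4 : ∑ w, (G.degree w : ℝ) * c w ≤ ∑ w, (G.maxDegree : ℝ) * c w := by
    apply Finset.sum_le_sum
    intro w _
    apply mul_le_mul_of_nonneg_right _ (hc w)
    exact_mod_cast G.degree_le_maxDegree w
  have h5 : ∑ w, (G.maxDegree : ℝ) * c w = (G.maxDegree : ℝ) * ∑ v, c v := by
    rw [Finset.mul_sum]
  linarith

end Mechanism

theorem locally_optimal_frugality {V : Type*} [Fintype V] [DecidableEq V]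
    (G : SimpleGraph V) [DecidableRel G.Adj]
    (hG : ∀ v : V, ∃ w, G.Adj v w)
    (A : (V → ℝ) → Finset V)
    (hA : ∀ b, IsVertexCover G (A b)) (hmono : MonotoneRule A)
    (hloc : LocallyOptimal G A) (c : V → ℝ) (hc : ∀ v, 0 ≤ c v)
    (S : Finset V) (hS : IsCheapest (VCSystem G) c S) :
    totalPayment A c ≤ 2 * (G.maxDegree : ℝ) * NTUmin (VCSystem G) c S := by
  classical
  set s : Set ℝ := (fun b => ∑ e ∈ S, b e) '' BidsNTU (VCSystem G) c S with hs
  have hsne : s.Nonempty := Set.Nonempty.image _ (bidsNTU_nonempty G c S hS)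
  have hbound : ∀ x ∈ s, totalPayment A c ≤ 2 * (G.maxDegree : ℝ) * x := by
    rintro x ⟨b, hb, rfl⟩
    have h1 := payment_le_maxdeg_cost G A hloc c hc
    have h2 := total_cost_le_two_bid G hG c hc S hS b hb
    have hΔnn : (0:ℝ) ≤ (G.maxDegree : ℝ) := Nat.cast_nonneg _
    calc totalPayment A c ≤ (G.maxDegree : ℝ) * ∑ v, c v := h1
      _ ≤ (G.maxDegree : ℝ) * (2 * ∑ e ∈ S, b e) := by
          exact mul_le_mul_of_nonneg_left h2 hΔnn
      _ = 2 * (G.maxDegree : ℝ) * ∑ e ∈ S, b e := by ring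
  show totalPayment A c ≤ 2 * (G.maxDegree : ℝ) * sInf s
  by_cases hΔ : (G.maxDegree : ℝ) = 0
  · obtain ⟨x, hx⟩ := hsne
    have := hbound x hx
    rw [hΔ] at this ⊢
    simpa using this
  · have hΔpos : (0:ℝ) < (G.maxDegree : ℝ) :=
      lt_of_le_of_ne (Nat.cast_nonneg _) (Ne.symm hΔ)
    have h2Δpos : (0:ℝ) < 2 * (G.maxDegree : ℝ) := by linarith
    have hdiv : totalPayment A c / (2 * (G.maxDegree : ℝ)) ≤ sInf s := by
      apply le_csInf hsne
      intro x hx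
      rw [div_le_iff₀ h2Δpos]
      calc totalPayment A c ≤ 2 * (G.maxDegree : ℝ) * x := hbound x hx
        _ = x * (2 * (G.maxDegree : ℝ)) := by ring
    rw [div_le_iff₀ h2Δpos] at hdiv
    calc totalPayment A c ≤ sInf s * (2 * (G.maxDegree : ℝ)) := hdiv
      _ = 2 * (G.maxDegree : ℝ) * sInf s := by ring
end

section
/- For any monopoly-free set system (E,F), any nonnegative cost vector c, and any cheapest feasible set S, the total VCG payment is at least NTUmax(c,S); that is, ∑_{e∈S} min{ c_e + c(T) − c(S) : T ∈ F, e ∉ T } ≥ NTUmax(c,S). -/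
/-!
Fix a bid vector `b` satisfying (1) and (2), a winner `e ∈ S` and a feasible `T` avoiding `e`.
Condition (2) for `T` bounds `b(S \ T)`, while (1) gives `b(S \ T) ≥ b_e + c(S \ T) - c_e`;
since `c(T \ S) - c(S \ T) = c(T) - c(S)`, this yields `b_e ≤ c_e + c(T) - c(S)`.
Minimising over `T` bounds `b_e` by the VCG payment of `e`, and summing over `S` bounds `∑ b`.
-/

open Finset

/-- The VCG payment to a winner `e` of the winning set `S`. -/
noncomputable def vcgPayment {E : Type*} (F : Set (Finset E)) (c : E → ℝ)
    (S : Finset E) (e : E) : ℝ :=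
  sInf {x : ℝ | ∃ T ∈ F, e ∉ T ∧ x = c e + (∑ e' ∈ T, c e') - ∑ e' ∈ S, c e'}

section

variable {E : Type*}

lemma le_cost_add_sum_sub_sum [DecidableEq E] {b c : E → ℝ} {S T : Finset E} {e : E}
    (hcb : ∀ e ∈ S, c e ≤ b e) (hST : ∑ e ∈ S \ T, b e ≤ ∑ e ∈ T \ S, c e)
    (heS : e ∈ S) (heT : e ∉ T) :
    b e ≤ c e + ∑ e ∈ T, c e - ∑ e ∈ S, c e := by
  have hsingle : b e - c e ≤ ∑ e ∈ S \ T, (b e - c e) :=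
    single_le_sum (fun i hi => sub_nonneg.2 (hcb i (mem_sdiff.1 hi).1)) (mem_sdiff.2 ⟨heS, heT⟩)
  have hdiff := sum_sdiff_sub_sum_sdiff (s₁ := S) (s₂ := T) (f := c)
  rw [sum_sub_distrib] at hsingle
  linarith

lemma vcgPayment_nonneg {F : Set (Finset E)} {c : E → ℝ} {S : Finset E} {e : E}
    (hce : 0 ≤ c e) (hS : ∀ T ∈ F, ∑ e ∈ S, c e ≤ ∑ e ∈ T, c e) :
    0 ≤ vcgPayment F c S e := by
  refine Real.sInf_nonneg ?_
  rintro _ ⟨T, hT, -, rfl⟩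
  linarith [hS T hT]

lemma le_vcgPayment [DecidableEq E] {F : Set (Finset E)} {b c : E → ℝ} {S : Finset E} {e : E}
    (hmf : ∃ T ∈ F, e ∉ T) (hcb : ∀ e ∈ S, c e ≤ b e)
    (hST : ∀ T ∈ F, ∑ e ∈ S \ T, b e ≤ ∑ e ∈ T \ S, c e) (heS : e ∈ S) :
    b e ≤ vcgPayment F c S e := by
  obtain ⟨T₀, hT₀, heT₀⟩ := hmf
  refine le_csInf ⟨_, T₀, hT₀, heT₀, rfl⟩ ?_
  rintro _ ⟨T, hT, heT, rfl⟩
  exact le_cost_add_sum_sub_sum hcb (hST T hT) heS heT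

end

theorem vcg_payment_ge_ntumax {E : Type*} [DecidableEq E] (F : Set (Finset E))
    (c : E → ℝ) (S : Finset E) (hmf : MonopolyFree F) (hc : ∀ e, 0 ≤ c e)
    (hS : IsCheapest F c S) :
    NTUmax F c S ≤ ∑ e ∈ S, vcgPayment F c S e := by
  -- The total payment must be nonnegative because with no admissible bids `NTUmax` is `sSup ∅ = 0`.
  refine Real.sSup_le ?_ (sum_nonneg fun e _ => vcgPayment_nonneg (hc e) hS.2)
  rintro _ ⟨b, ⟨hcb, hST, -⟩, rfl⟩
  exact sum_le_sum fun e heS => le_vcgPayment (hmf e) hcb hST heS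
end
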